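/- arXiv:2603.21345 — 7 statements merged into one kernel-verified Lean document; each statement's English description precedes it below -/
import Mathlib

section
/- For all integers r ≥ 1, M ≥ 1 and all x ∈ ℝ, Λ^{[M−1,M]}_{[1]} · X^{[M]}_{[r]}(x) = X^{[M−1]}_{[r]}(x) · 𝔛_{[r,1]}(x). -/
open Matrix

noncomputable section

/-- Monomial matrix `X^{[M]}_{[r]}(x)`. -/
def Xmat (r M : ℕ) (x : ℝ) : Matrix (Fin M) (Fin r) ℝ :=
  Matrix.of fun i s => if (i : ℕ) % r = (s : ℕ) then x ^ ((i : ℕ) / r) else 0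

/-- Truncated shift matrix `Λ^{[M,M']}_{[r]}`. -/
def Lam (r M M' : ℕ) : Matrix (Fin M) (Fin M') ℝ :=
  Matrix.of fun i j => if (j : ℕ) = (i : ℕ) + r then 1 else 0

/-- The matrix `𝔛_{[r,s]}(x)`: `r × r` with `(i,j)` entry `1` if `i < r − s` and `j = i + s`,
`x` if `i ≥ r − s` and `j = i − (r − s)`, and `0` otherwise. -/
def frakX (r s : ℕ) (x : ℝ) : Matrix (Fin r) (Fin r) ℝ :=
  Matrix.of fun i j =>
    if (i : ℕ) < r - s ∧ (j : ℕ) = (i : ℕ) + s then 1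
    else if r - s ≤ (i : ℕ) ∧ (i : ℕ) = (j : ℕ) + (r - s) then x
    else 0

/-- For all integers `r ≥ 1`, `M ≥ 1` and real `x`,
`Λ^{[M−1,M]}_{[1]} · X^{[M]}_{[r]}(x) = X^{[M−1]}_{[r]}(x) · 𝔛_{[r,1]}(x)`. -/
theorem oneStep_shift_monomial (r M : ℕ) (hr : 1 ≤ r) (hM : 1 ≤ M) (x : ℝ) :
    Lam 1 (M - 1) M * Xmat r M x = Xmat r (M - 1) x * frakX r 1 x := by
  ext i s
  have hi1 : (i : ℕ) + 1 < M := by omega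
  have hrpos : 0 < r := hr
  have hur : (i : ℕ) % r < r := Nat.mod_lt _ hrpos
  have hqu : r * ((i : ℕ) / r) + (i : ℕ) % r = (i : ℕ) := Nat.div_add_mod _ _
  rw [Matrix.mul_apply, Matrix.mul_apply]
  rw [Finset.sum_eq_single (⟨(i : ℕ) + 1, hi1⟩ : Fin M)]
  · rw [Finset.sum_eq_single (⟨(i : ℕ) % r, hur⟩ : Fin r)]
    · show (if ((i:ℕ)+1 : ℕ) = (i:ℕ) + 1 then (1:ℝ) else 0) *
          (if ((i:ℕ)+1) % r = (s:ℕ) then x ^ (((i:ℕ)+1) / r) else 0) =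
          (if (i:ℕ) % r = (i:ℕ) % r then x ^ ((i:ℕ) / r) else 0) *
          (if (i:ℕ) % r < r - 1 ∧ (s:ℕ) = (i:ℕ) % r + 1 then (1:ℝ)
            else if r - 1 ≤ (i:ℕ) % r ∧ (i:ℕ) % r = (s:ℕ) + (r - 1) then x else 0)
      rw [if_pos rfl, if_pos rfl, one_mul]
      by_cases hu : (i : ℕ) % r < r - 1
      · have key : (i : ℕ) + 1 = ((i:ℕ) % r + 1) + r * ((i:ℕ) / r) := by omega
        have hmod : ((i : ℕ) + 1) % r = (i : ℕ) % r + 1 := by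
          rw [key, Nat.add_mul_mod_self_left, Nat.mod_eq_of_lt (by omega)]
        have hdiv : ((i : ℕ) + 1) / r = (i : ℕ) / r := by
          rw [key, Nat.add_mul_div_left _ _ hrpos, Nat.div_eq_of_lt (by omega), zero_add]
        rw [hmod, hdiv]
        by_cases hs : (i : ℕ) % r + 1 = (s : ℕ)
        · rw [if_pos hs, if_pos ⟨hu, hs.symm⟩, mul_one]
        · rw [if_neg hs, if_neg (fun h => hs h.2.symm),
            if_neg (fun h => hs (by omega)), mul_zero]
      · have hu' : (i : ℕ) % r = r - 1 := by omega
        have key : (i : ℕ) + 1 = r * ((i:ℕ) / r + 1) := by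
          rw [Nat.mul_add, mul_one]; omega
        have hmod : ((i : ℕ) + 1) % r = 0 := by rw [key, Nat.mul_mod_right]
        have hdiv : ((i : ℕ) + 1) / r = (i : ℕ) / r + 1 := by
          rw [key, Nat.mul_div_cancel_left _ hrpos]
        rw [hmod, hdiv]
        by_cases hs : (0 : ℕ) = (s : ℕ)
        · rw [if_pos hs,
            if_neg (fun h => absurd h.1 (by omega) :
              ¬((i:ℕ) % r < r - 1 ∧ (s:ℕ) = (i:ℕ) % r + 1)),
            if_pos (⟨by omega, by omega⟩ : r - 1 ≤ (i:ℕ) % r ∧ (i:ℕ) % r = (s:ℕ) + (r-1)),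
            pow_succ]
        · rw [if_neg hs,
            if_neg (fun h => hs (by omega) :
              ¬((i:ℕ) % r < r - 1 ∧ (s:ℕ) = (i:ℕ) % r + 1)),
            if_neg (fun h => hs (by omega) :
              ¬(r - 1 ≤ (i:ℕ) % r ∧ (i:ℕ) % r = (s:ℕ) + (r-1))),
            mul_zero]
    · intro b _ hb
      show (if (i:ℕ) % r = (b:ℕ) then x ^ ((i:ℕ) / r) else 0) * _ = 0
      rw [if_neg (fun h => hb (by simp [Fin.ext_iff, ← h])), zero_mul]
    · intro h; exact absurd (Finset.mem_univ _) h
  · intro b _ hb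
    show (if (b:ℕ) = (i:ℕ) + 1 then (1:ℝ) else 0) * _ = 0
    rw [if_neg (fun h => hb (by simp [Fin.ext_iff, h])), zero_mul]
  · intro h; exact absurd (Finset.mem_univ _) h
end
end

section
/- Assume 𝓜_N admits a Gauss–Borel factorization 𝓜_N = 𝓛_N^{-1}𝓤_N^{-1}. Then: (i) the first N rows of the (N+q)×N matrix 𝓜^{[N+q,N]}·𝓤_N coincide with 𝓛_N^{-1}, and for 0 ≤ i < q, 0 ≤ j < N its entry in row N+i and column j equals Σ_{0≤a<q} Σ_{0≤b<p} ∫ x^{N_q} (𝔛_{[q,s_q]}(x))_{i,a} (A^{[N]}(x))_{b,j} dμ_{a,b}(x); (ii) the first N columns of the N×(N+p) matrix 𝓛_N·𝓜^{[N,N+p]} coincide with 𝓤_N^{-1}, and for 0 ≤ i < N, 0 ≤ j < p its entry in row i and column N+j equals Σ_{0≤a<q} Σ_{0≤b<p} ∫ (B^{[N]}(x))_{i,a} x^{N_p} (𝔛_{[p,s_p]}(x))_{j,b} dμ_{a,b}(x). -/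
open Matrix MeasureTheory

noncomputable section

/-- Moment matrix `𝓜^{[N,M]}` of the `q × p` matrix of measures `μ`. -/
def Mom (q p : ℕ) (hq : 0 < q) (hp : 0 < p) (μ : Fin q → Fin p → Measure ℝ)
    (N M : ℕ) : Matrix (Fin N) (Fin M) ℝ :=
  Matrix.of fun i j =>
    ∫ x : ℝ, x ^ ((i : ℕ) / q + (j : ℕ) / p)
      ∂ μ ⟨(i : ℕ) % q, Nat.mod_lt _ hq⟩ ⟨(j : ℕ) % p, Nat.mod_lt _ hp⟩

theorem natkey1 (q N i : ℕ) (hq : 0 < q) (h : N % q + i < q) :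
    (N + i) % q = N % q + i ∧ (N + i) / q = N / q := by
  have hrep : N + i = q * (N / q) + (N % q + i) := by
    have h1 := Nat.div_add_mod N q; omega
  refine ⟨?_, ?_⟩
  · rw [hrep, Nat.mul_add_mod, Nat.mod_eq_of_lt h]
  · rw [hrep, Nat.mul_add_div hq, Nat.div_eq_of_lt h]; omega

theorem natkey2 (q N i : ℕ) (hq : 0 < q) (hi : i < q) (h : q ≤ N % q + i) :
    (N + i) % q = N % q + i - q ∧ (N + i) / q = N / q + 1 := by
  have hm := Nat.mod_lt N hq
  have hrep : N + i = q * (N / q + 1) + (N % q + i - q) := by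
    rw [Nat.mul_add, Nat.mul_one]
    have h1 := Nat.div_add_mod N q
    omega
  have hlt : N % q + i - q < q := by omega
  refine ⟨?_, ?_⟩
  · rw [hrep, Nat.mul_add_mod, Nat.mod_eq_of_lt hlt]
  · rw [hrep, Nat.mul_add_div hq, Nat.div_eq_of_lt hlt]

/-- Pointwise evaluation of `x^(N/q) * 𝔛_{[q, N%q]}(x)_{i,a}`. -/
theorem xfrak (q N : ℕ) (hq : 0 < q) (i a : Fin q) (x : ℝ) :
    x ^ (N / q) * frakX q (N % q) x i a
      = if (a : ℕ) = (N + (i : ℕ)) % q then x ^ ((N + (i : ℕ)) / q) else 0 := by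
  have hs : N % q < q := Nat.mod_lt N hq
  have hi := i.isLt
  have ha := a.isLt
  simp only [frakX, Matrix.of_apply]
  by_cases hc : N % q + (i : ℕ) < q
  · obtain ⟨hm, hd⟩ := natkey1 q N i hq hc
    rw [hm, hd]
    by_cases haa : (a : ℕ) = (i : ℕ) + N % q
    · rw [if_pos ⟨by omega, haa⟩, if_pos (by omega : (a : ℕ) = N % q + (i : ℕ))]
      exact mul_one _
    · rw [if_neg (fun h => haa h.2),
        if_neg (fun h => absurd h.1 (by omega : ¬ q - N % q ≤ (i : ℕ))),
        if_neg (fun h => haa (by omega))]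
      exact mul_zero _
  · obtain ⟨hm, hd⟩ := natkey2 q N i hq hi (by omega)
    rw [hm, hd]
    by_cases haa : (i : ℕ) = (a : ℕ) + (q - N % q)
    · rw [if_neg (fun h => absurd h.1 (by omega : ¬ (i : ℕ) < q - N % q)),
        if_pos ⟨by omega, haa⟩, if_pos (by omega : (a : ℕ) = N % q + (i : ℕ) - q)]
      exact (pow_succ x (N / q)).symm
    · rw [if_neg (fun h => absurd h.1 (by omega : ¬ (i : ℕ) < q - N % q)),
        if_neg (fun h => haa h.2), if_neg (fun h => haa (by omega))]
      exact mul_zero _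

theorem intpow {m : Measure ℝ} (h : ∀ k : ℕ, Integrable (fun x : ℝ => |x| ^ k) m)
    (k : ℕ) : Integrable (fun x : ℝ => x ^ k) m := by
  have h2 : Integrable (fun x : ℝ => ‖x ^ k‖) m := by
    simpa [Real.norm_eq_abs, abs_pow] using h k
  exact (integrable_norm_iff ((measurable_id.pow_const k).aestronglyMeasurable)).mp h2

/-- Under a Gauss–Borel factorization `𝓜_N = 𝓛_N⁻¹ 𝓤_N⁻¹`:
(i) the first `N` rows of `𝓜^{[N+q,N]} · 𝓤_N` coincide with `𝓛_N⁻¹`, and the remaining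
`q` rows have the stated integral expression in terms of `A^{[N]} = (X^{[N]}_{[p]})ᵀ 𝓤_N`;
(ii) the first `N` columns of `𝓛_N · 𝓜^{[N,N+p]}` coincide with `𝓤_N⁻¹`, and the remaining
`p` columns have the stated integral expression in terms of `B^{[N]} = 𝓛_N X^{[N]}_{[q]}`. -/
theorem gauss_borel_bordered_blocks (p q N : ℕ) (hp : 0 < p) (hq : 0 < q)
    (μ : Fin q → Fin p → Measure ℝ)
    (hμ : ∀ (a : Fin q) (b : Fin p) (k : ℕ),
      Integrable (fun x : ℝ => |x| ^ k) (μ a b))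
    (L U : Matrix (Fin N) (Fin N) ℝ)
    (hLtri : ∀ i j : Fin N, i < j → L i j = 0)
    (hUtri : ∀ i j : Fin N, j < i → U i j = 0)
    (hLunit : IsUnit L.det) (hUunit : IsUnit U.det)
    (hGB : Mom q p hq hp μ N N = L⁻¹ * U⁻¹) :
    ((∀ i j : Fin N,
        (Mom q p hq hp μ (N + q) N * U) (Fin.castAdd q i) j = L⁻¹ i j) ∧
      (∀ (i : Fin q) (j : Fin N),
        (Mom q p hq hp μ (N + q) N * U) (Fin.natAdd N i) j =
          ∑ a : Fin q, ∑ b : Fin p,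
            ∫ x : ℝ, x ^ (N / q) * frakX q (N % q) x i a *
              ((Xmat p N x)ᵀ * U) b j ∂ μ a b)) ∧
    ((∀ i j : Fin N,
        (L * Mom q p hq hp μ N (N + p)) i (Fin.castAdd p j) = U⁻¹ i j) ∧
      (∀ (i : Fin N) (j : Fin p),
        (L * Mom q p hq hp μ N (N + p)) i (Fin.natAdd N j) =
          ∑ a : Fin q, ∑ b : Fin p,
            ∫ x : ℝ, (L * Xmat q N x) i a * x ^ (N / p) *
              frakX p (N % p) x j b ∂ μ a b)) := by
  have hMN : Mom q p hq hp μ N N * U = L⁻¹ := by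
    rw [hGB, Matrix.mul_assoc, Matrix.nonsing_inv_mul U hUunit, Matrix.mul_one]
  have hMN' : L * Mom q p hq hp μ N N = U⁻¹ := by
    rw [hGB, ← Matrix.mul_assoc, Matrix.mul_nonsing_inv L hLunit, Matrix.one_mul]
  refine ⟨⟨?_, ?_⟩, ?_, ?_⟩
  · intro i j
    have h1 : (Mom q p hq hp μ (N + q) N * U) (Fin.castAdd q i) j
        = (Mom q p hq hp μ N N * U) i j := by
      simp only [Matrix.mul_apply]
      refine Finset.sum_congr rfl fun k _ => ?_
      simp only [Mom, Matrix.of_apply, Fin.coe_castAdd]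
    rw [h1, hMN]
  · intro i j
    set a₀ : Fin q := ⟨(N + (i : ℕ)) % q, Nat.mod_lt _ hq⟩ with ha₀
    have step : ∀ (a : Fin q) (b : Fin p),
        (∫ x : ℝ, x ^ (N / q) * frakX q (N % q) x i a *
            ((Xmat p N x)ᵀ * U) b j ∂ μ a b)
          = if a = a₀ then
              ∑ k : Fin N, (if (b : ℕ) = (k : ℕ) % p then
                (∫ x : ℝ, x ^ ((N + (i : ℕ)) / q + (k : ℕ) / p) ∂ μ a b) * U k j
                else 0)
            else 0 := by
      intro a b
      by_cases ha : a = a₀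
      · rw [if_pos ha]
        have hint : ∀ x : ℝ, x ^ (N / q) * frakX q (N % q) x i a *
              ((Xmat p N x)ᵀ * U) b j
            = ∑ k : Fin N, (if (b : ℕ) = (k : ℕ) % p then
                x ^ ((N + (i : ℕ)) / q + (k : ℕ) / p) * U k j else 0) := by
          intro x
          rw [xfrak q N hq i a x, if_pos (by rw [ha]), Matrix.mul_apply,
            Finset.mul_sum]
          refine Finset.sum_congr rfl fun k _ => ?_
          simp only [Matrix.transpose_apply, Xmat, Matrix.of_apply]
          by_cases hk : (k : ℕ) % p = (b : ℕ)
          · rw [if_pos hk, if_pos hk.symm, pow_add]; ring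
          · rw [if_neg hk, if_neg (fun hh => hk hh.symm)]; ring
        rw [integral_congr_ae (Filter.Eventually.of_forall hint),
          integral_finset_sum]
        · refine Finset.sum_congr rfl fun k _ => ?_
          by_cases hk : (b : ℕ) = (k : ℕ) % p
          · simp only [if_pos hk]
            exact integral_mul_const _ _
          · simp only [if_neg hk, integral_zero]
        · intro k _
          by_cases hk : (b : ℕ) = (k : ℕ) % p
          · simp only [if_pos hk]
            exact (intpow (hμ a b) _).mul_const _
          · simp only [if_neg hk]
            exact integrable_zero _ _ _
      · rw [if_neg ha]
        have hint : ∀ x : ℝ, x ^ (N / q) * frakX q (N % q) x i a *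
            ((Xmat p N x)ᵀ * U) b j = 0 := by
          intro x
          rw [xfrak q N hq i a x, if_neg (fun h => ha (Fin.ext h)), zero_mul]
        rw [integral_congr_ae (Filter.Eventually.of_forall hint), integral_zero]
    have hsum : (∑ a : Fin q, ∑ b : Fin p,
          ∫ x : ℝ, x ^ (N / q) * frakX q (N % q) x i a *
            ((Xmat p N x)ᵀ * U) b j ∂ μ a b)
        = ∑ b : Fin p, ∑ k : Fin N, (if (b : ℕ) = (k : ℕ) % p then
            (∫ x : ℝ, x ^ ((N + (i : ℕ)) / q + (k : ℕ) / p) ∂ μ a₀ b) * U k j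
            else 0) := by
      rw [Finset.sum_congr rfl fun a _ => Finset.sum_congr rfl fun b _ => step a b,
        Finset.sum_comm]
      refine Finset.sum_congr rfl fun b _ => ?_
      rw [Finset.sum_ite_eq' Finset.univ a₀, if_pos (Finset.mem_univ _)]
    rw [Matrix.mul_apply, hsum, Finset.sum_comm]
    refine Finset.sum_congr rfl fun k _ => ?_
    have hcol : ∀ b : Fin p, ((b : ℕ) = (k : ℕ) % p)
        ↔ (b = ⟨(k : ℕ) % p, Nat.mod_lt _ hp⟩) := fun b => by
      rw [Fin.ext_iff]
    simp only [hcol]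
    rw [Finset.sum_ite_eq' Finset.univ (⟨(k : ℕ) % p, Nat.mod_lt _ hp⟩ : Fin p),
      if_pos (Finset.mem_univ _)]
    rfl
  · intro i j
    have h1 : (L * Mom q p hq hp μ N (N + p)) i (Fin.castAdd p j)
        = (L * Mom q p hq hp μ N N) i j := by
      simp only [Matrix.mul_apply]
      refine Finset.sum_congr rfl fun k _ => ?_
      simp only [Mom, Matrix.of_apply, Fin.coe_castAdd]
    rw [h1, hMN']
  · intro i j
    set b₀ : Fin p := ⟨(N + (j : ℕ)) % p, Nat.mod_lt _ hp⟩ with hb₀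
    have step : ∀ (a : Fin q) (b : Fin p),
        (∫ x : ℝ, (L * Xmat q N x) i a * x ^ (N / p) *
            frakX p (N % p) x j b ∂ μ a b)
          = if b = b₀ then
              ∑ k : Fin N, (if (a : ℕ) = (k : ℕ) % q then
                L i k * ∫ x : ℝ, x ^ ((k : ℕ) / q + (N + (j : ℕ)) / p) ∂ μ a b
                else 0)
            else 0 := by
      intro a b
      by_cases hb : b = b₀
      · rw [if_pos hb]
        have hint : ∀ x : ℝ, (L * Xmat q N x) i a * x ^ (N / p) *
              frakX p (N % p) x j b
            = ∑ k : Fin N, (if (a : ℕ) = (k : ℕ) % q then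
                L i k * x ^ ((k : ℕ) / q + (N + (j : ℕ)) / p) else 0) := by
          intro x
          rw [mul_assoc, xfrak p N hp j b x, if_pos (by rw [hb]),
            Matrix.mul_apply, Finset.sum_mul]
          refine Finset.sum_congr rfl fun k _ => ?_
          simp only [Xmat, Matrix.of_apply]
          by_cases hk : (k : ℕ) % q = (a : ℕ)
          · rw [if_pos hk, if_pos hk.symm, pow_add]; ring
          · rw [if_neg hk, if_neg (fun hh => hk hh.symm)]; ring
        rw [integral_congr_ae (Filter.Eventually.of_forall hint),
          integral_finset_sum]
        · refine Finset.sum_congr rfl fun k _ => ?_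
          by_cases hk : (a : ℕ) = (k : ℕ) % q
          · simp only [if_pos hk]
            exact integral_const_mul _ _
          · simp only [if_neg hk, integral_zero]
        · intro k _
          by_cases hk : (a : ℕ) = (k : ℕ) % q
          · simp only [if_pos hk]
            exact (intpow (hμ a b) _).const_mul _
          · simp only [if_neg hk]
            exact integrable_zero _ _ _
      · rw [if_neg hb]
        have hint : ∀ x : ℝ, (L * Xmat q N x) i a * x ^ (N / p) *
            frakX p (N % p) x j b = 0 := by
          intro x
          rw [mul_assoc, xfrak p N hp j b x, if_neg (fun h => hb (Fin.ext h)),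
            mul_zero]
        rw [integral_congr_ae (Filter.Eventually.of_forall hint), integral_zero]
    have hsum : (∑ a : Fin q, ∑ b : Fin p,
          ∫ x : ℝ, (L * Xmat q N x) i a * x ^ (N / p) *
            frakX p (N % p) x j b ∂ μ a b)
        = ∑ a : Fin q, ∑ k : Fin N, (if (a : ℕ) = (k : ℕ) % q then
            L i k * ∫ x : ℝ, x ^ ((k : ℕ) / q + (N + (j : ℕ)) / p) ∂ μ a b₀
            else 0) := by
      rw [Finset.sum_congr rfl fun a _ => Finset.sum_congr rfl fun b _ => step a b]
      refine Finset.sum_congr rfl fun a _ => ?_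
      rw [Finset.sum_ite_eq' Finset.univ b₀, if_pos (Finset.mem_univ _)]
    rw [Matrix.mul_apply, hsum, Finset.sum_comm]
    refine Finset.sum_congr rfl fun k _ => ?_
    have hcol : ∀ a : Fin q, ((a : ℕ) = (k : ℕ) % q)
        ↔ (a = ⟨(k : ℕ) % q, Nat.mod_lt _ hq⟩) := fun a => by
      rw [Fin.ext_iff]
    simp only [hcol]
    rw [Finset.sum_ite_eq' Finset.univ (⟨(k : ℕ) % q, Nat.mod_lt _ hq⟩ : Fin q),
      if_pos (Finset.mem_univ _)]
    rfl
end
end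

section
/- Assume 𝓜_N admits a Gauss–Borel factorization 𝓜_N = 𝓛_N^{-1}𝓤_N^{-1} and N ≥ max(p,q). Then the bottom-right q×q block of 𝓛_N^{-1} is given by (𝓛_N^{-1})_{N−q+i, N−q+j} = Σ_{0≤a<q} Σ_{0≤b<p} ∫ x^{N_q−1} (𝔛_{[q,s_q]}(x))_{i,a} (A^{[N]}(x))_{b, N−q+j} dμ_{a,b}(x) for 0 ≤ i,j < q, and the bottom-right p×p block of 𝓤_N^{-1} is given by (𝓤_N^{-1})_{N−p+i, N−p+j} = Σ_{0≤a<q} Σ_{0≤b<p} ∫ (B^{[N]}(x))_{N−p+i, a} x^{N_p−1} (𝔛_{[p,s_p]}(x))_{j,b} dμ_{a,b}(x) for 0 ≤ i,j < p. -/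
open Matrix MeasureTheory

noncomputable section

lemma frakX_mul_pow' (r m s : ℕ) (hr : 0 < r) (hm : 1 ≤ m) (hs : s < r)
    (x : ℝ) (i a : Fin r) :
    x ^ (m - 1) * frakX r s x i a =
      if (a : ℕ) = (r * m + s - r + (i : ℕ)) % r then
        x ^ ((r * m + s - r + (i : ℕ)) / r) else 0 := by
  have htr : r ≤ r * m := Nat.le_mul_of_pos_right r hm
  have hsub : r * (m - 1) = r * m - r := by rw [Nat.mul_sub, mul_one]
  have hi' := i.isLt
  have ha' := a.isLt
  unfold frakX
  simp only [Matrix.of_apply]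
  by_cases hi : (i : ℕ) < r - s
  · have h1 : r * m + s - r + (i : ℕ) = (s + (i : ℕ)) + r * (m - 1) := by omega
    have h2 : s + (i : ℕ) < r := by omega
    rw [h1, Nat.add_mul_mod_self_left, Nat.add_mul_div_left _ _ hr,
        Nat.mod_eq_of_lt h2, Nat.div_eq_of_lt h2, zero_add]
    by_cases ha : (a : ℕ) = (i : ℕ) + s
    · rw [if_pos ⟨hi, ha⟩, if_pos (by omega), mul_one]
    · rw [if_neg (by tauto), if_neg (by omega), if_neg (by omega), mul_zero]
  · have h1 : r * m + s - r + (i : ℕ) = (s + (i : ℕ) - r) + r * m := by omega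
    have h2 : s + (i : ℕ) - r < r := by omega
    rw [h1, Nat.add_mul_mod_self_left, Nat.add_mul_div_left _ _ hr,
        Nat.mod_eq_of_lt h2, Nat.div_eq_of_lt h2, zero_add]
    by_cases ha : (a : ℕ) = s + (i : ℕ) - r
    · rw [if_neg (by omega), if_pos ⟨by omega, by omega⟩, if_pos ha, ← pow_succ]
      congr 1
      omega
    · rw [if_neg (by omega), if_neg (by omega), if_neg (by omega), mul_zero]

lemma frakX_mul_pow (r N : ℕ) (hr : 0 < r) (hrN : r ≤ N) (x : ℝ) (i a : Fin r) :
    x ^ (N / r - 1) * frakX r (N % r) x i a =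
      if (a : ℕ) = (N - r + (i : ℕ)) % r then x ^ ((N - r + (i : ℕ)) / r) else 0 := by
  have hN : r * (N / r) + N % r = N := Nat.div_add_mod N r
  rw [frakX_mul_pow' r (N / r) (N % r) hr ((Nat.one_le_div_iff hr).mpr hrN)
      (Nat.mod_lt _ hr) x i a, hN]

lemma integrable_pow_meas (ν : Measure ℝ) (h : ∀ k : ℕ, Integrable (fun x : ℝ => |x| ^ k) ν)
    (n : ℕ) : Integrable (fun x : ℝ => x ^ n) ν := by
  refine (h n).mono' (continuous_pow n).aestronglyMeasurable ?_
  filter_upwards with x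
  simp [abs_pow]

lemma integral_aux (ν : Measure ℝ) (h : ∀ k : ℕ, Integrable (fun x : ℝ => |x| ^ k) ν)
    (cA cB : Prop) [Decidable cA] [Decidable cB] (n1 n2 : ℕ) (c : ℝ) :
    ∫ x : ℝ, (if cA then x ^ n1 else 0) * ((if cB then x ^ n2 else 0) * c) ∂ν =
      if cA ∧ cB then (∫ x : ℝ, x ^ (n1 + n2) ∂ν) * c else 0 := by
  by_cases hA : cA <;> by_cases hB : cB <;> simp [hA, hB]
  rw [← integral_mul_const]
  congr 1; ext x; ring

lemma integrable_aux (ν : Measure ℝ) (h : ∀ k : ℕ, Integrable (fun x : ℝ => |x| ^ k) ν)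
    (cA cB : Prop) [Decidable cA] [Decidable cB] (n1 n2 : ℕ) (c : ℝ) :
    Integrable (fun x : ℝ => (if cA then x ^ n1 else 0) * ((if cB then x ^ n2 else 0) * c)) ν := by
  by_cases h1 : cA
  · by_cases h2 : cB
    · simp only [if_pos h1, if_pos h2]
      refine ((integrable_pow_meas ν h (n1 + n2)).mul_const c).congr ?_
      filter_upwards with x
      ring
    · simp only [if_neg h2, zero_mul, mul_zero]
      exact integrable_zero _ _ _
  · simp only [if_neg h1, zero_mul]
    exact integrable_zero _ _ _

/-- Under a Gauss–Borel factorization `𝓜_N = 𝓛_N⁻¹ 𝓤_N⁻¹` with `N ≥ max(p,q)`,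
the bottom-right `q × q` block of `𝓛_N⁻¹` and the bottom-right `p × p` block of `𝓤_N⁻¹`
have the stated integral expressions. -/
theorem gauss_borel_inverse_corner_blocks (p q N : ℕ) (hp : 0 < p) (hq : 0 < q)
    (hpN : p ≤ N) (hqN : q ≤ N)
    (μ : Fin q → Fin p → Measure ℝ)
    (hμ : ∀ (a : Fin q) (b : Fin p) (k : ℕ),
      Integrable (fun x : ℝ => |x| ^ k) (μ a b))
    (L U : Matrix (Fin N) (Fin N) ℝ)
    (hLtri : ∀ i j : Fin N, i < j → L i j = 0)
    (hUtri : ∀ i j : Fin N, j < i → U i j = 0)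
    (hLunit : IsUnit L.det) (hUunit : IsUnit U.det)
    (hGB : Mom q p hq hp μ N N = L⁻¹ * U⁻¹) :
    (∀ i j : Fin q,
      L⁻¹ ⟨N - q + (i : ℕ), by have := i.isLt; omega⟩
           ⟨N - q + (j : ℕ), by have := j.isLt; omega⟩ =
        ∑ a : Fin q, ∑ b : Fin p,
          ∫ x : ℝ, x ^ (N / q - 1) * frakX q (N % q) x i a *
            ((Xmat p N x)ᵀ * U) b ⟨N - q + (j : ℕ), by have := j.isLt; omega⟩ ∂ μ a b) ∧
    (∀ i j : Fin p,
      U⁻¹ ⟨N - p + (i : ℕ), by have := i.isLt; omega⟩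
           ⟨N - p + (j : ℕ), by have := j.isLt; omega⟩ =
        ∑ a : Fin q, ∑ b : Fin p,
          ∫ x : ℝ, (L * Xmat q N x) ⟨N - p + (i : ℕ), by have := i.isLt; omega⟩ a *
            x ^ (N / p - 1) * frakX p (N % p) x j b ∂ μ a b) := by
  have hLinv : L⁻¹ = Mom q p hq hp μ N N * U := by
    rw [hGB, Matrix.mul_assoc, Matrix.nonsing_inv_mul U hUunit, Matrix.mul_one]
  have hUinv : U⁻¹ = L * Mom q p hq hp μ N N := by
    rw [hGB, ← Matrix.mul_assoc, Matrix.mul_nonsing_inv L hLunit, Matrix.one_mul]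
  constructor
  · -- first part
    intro i j
    rw [hLinv]
    set row : Fin N := ⟨N - q + (i : ℕ), by have := i.isLt; omega⟩ with hrow
    set col : Fin N := ⟨N - q + (j : ℕ), by have := j.isLt; omega⟩ with hcol
    have key : ∀ (a : Fin q) (b : Fin p),
        (∫ x : ℝ, x ^ (N / q - 1) * frakX q (N % q) x i a *
          ((Xmat p N x)ᵀ * U) b col ∂ μ a b) =
        ∑ k : Fin N, if (a : ℕ) = (N - q + (i : ℕ)) % q ∧ (k : ℕ) % p = (b : ℕ) then
          (∫ x : ℝ, x ^ ((N - q + (i : ℕ)) / q + (k : ℕ) / p) ∂ μ a b) * U k col else 0 := by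
      intro a b
      have hfun : ∀ x : ℝ, x ^ (N / q - 1) * frakX q (N % q) x i a *
          ((Xmat p N x)ᵀ * U) b col =
          ∑ k : Fin N,
            (if (a : ℕ) = (N - q + (i : ℕ)) % q then x ^ ((N - q + (i : ℕ)) / q) else 0) *
            ((if (k : ℕ) % p = (b : ℕ) then x ^ ((k : ℕ) / p) else 0) * U k col) := by
        intro x
        rw [Matrix.mul_apply, Finset.mul_sum]
        refine Finset.sum_congr rfl fun k _ => ?_
        rw [frakX_mul_pow q N hq hqN x i a]
        simp only [Xmat, Matrix.transpose_apply, Matrix.of_apply, mul_assoc]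
      calc (∫ x : ℝ, x ^ (N / q - 1) * frakX q (N % q) x i a *
            ((Xmat p N x)ᵀ * U) b col ∂ μ a b)
          = ∫ x : ℝ, ∑ k : Fin N,
              (if (a : ℕ) = (N - q + (i : ℕ)) % q then x ^ ((N - q + (i : ℕ)) / q) else 0) *
              ((if (k : ℕ) % p = (b : ℕ) then x ^ ((k : ℕ) / p) else 0) * U k col) ∂ μ a b := by
            congr 1; ext x; exact hfun x
        _ = ∑ k : Fin N, ∫ x : ℝ,
              (if (a : ℕ) = (N - q + (i : ℕ)) % q then x ^ ((N - q + (i : ℕ)) / q) else 0) *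
              ((if (k : ℕ) % p = (b : ℕ) then x ^ ((k : ℕ) / p) else 0) * U k col) ∂ μ a b :=
            integral_finset_sum _ (fun k _ => integrable_aux (μ a b) (hμ a b) _ _ _ _ _)
        _ = _ := Finset.sum_congr rfl fun k _ => integral_aux (μ a b) (hμ a b) _ _ _ _ _
    rw [Finset.sum_congr rfl fun a _ => Finset.sum_congr rfl fun b _ => key a b,
      Matrix.mul_apply]
    set A : Fin q := ⟨(N - q + (i : ℕ)) % q, Nat.mod_lt _ hq⟩ with hA
    have step1 : (∑ a : Fin q, ∑ b : Fin p, ∑ k : Fin N,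
        if (a : ℕ) = (N - q + (i : ℕ)) % q ∧ (k : ℕ) % p = (b : ℕ) then
          (∫ x : ℝ, x ^ ((N - q + (i : ℕ)) / q + (k : ℕ) / p) ∂ μ a b) * U k col else 0) =
        ∑ b : Fin p, ∑ k : Fin N,
        if (k : ℕ) % p = (b : ℕ) then
          (∫ x : ℝ, x ^ ((N - q + (i : ℕ)) / q + (k : ℕ) / p) ∂ μ A b) * U k col else 0 := by
      rw [Fintype.sum_eq_single A (fun a ha => Finset.sum_eq_zero fun b _ =>
        Finset.sum_eq_zero fun k _ => if_neg fun h => ha (Fin.ext h.1))]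
      refine Finset.sum_congr rfl fun b _ => Finset.sum_congr rfl fun k _ =>
        if_congr (and_iff_right rfl) rfl rfl
    have step2 : (∑ b : Fin p, ∑ k : Fin N,
        if (k : ℕ) % p = (b : ℕ) then
          (∫ x : ℝ, x ^ ((N - q + (i : ℕ)) / q + (k : ℕ) / p) ∂ μ A b) * U k col else 0) =
        ∑ k : Fin N,
          (∫ x : ℝ, x ^ ((N - q + (i : ℕ)) / q + (k : ℕ) / p)
            ∂ μ A ⟨(k : ℕ) % p, Nat.mod_lt _ hp⟩) * U k col := by
      rw [Finset.sum_comm]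
      refine Finset.sum_congr rfl fun k _ => ?_
      rw [Fintype.sum_eq_single (⟨(k : ℕ) % p, Nat.mod_lt _ hp⟩ : Fin p)
        (fun b hb => if_neg fun h => hb (Fin.ext h.symm)), if_pos rfl]
    rw [step1, step2]
    exact Finset.sum_congr rfl fun k _ => rfl
  · -- second part
    intro i j
    rw [hUinv]
    set row : Fin N := ⟨N - p + (i : ℕ), by have := i.isLt; omega⟩ with hrow
    set col : Fin N := ⟨N - p + (j : ℕ), by have := j.isLt; omega⟩ with hcol
    have key : ∀ (a : Fin q) (b : Fin p),
        (∫ x : ℝ, (L * Xmat q N x) row a * x ^ (N / p - 1) * frakX p (N % p) x j b ∂ μ a b) =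
        ∑ k : Fin N, if (b : ℕ) = (N - p + (j : ℕ)) % p ∧ (k : ℕ) % q = (a : ℕ) then
          (∫ x : ℝ, x ^ ((N - p + (j : ℕ)) / p + (k : ℕ) / q) ∂ μ a b) * L row k else 0 := by
      intro a b
      have hfun : ∀ x : ℝ, (L * Xmat q N x) row a * x ^ (N / p - 1) * frakX p (N % p) x j b =
          ∑ k : Fin N,
            (if (b : ℕ) = (N - p + (j : ℕ)) % p then x ^ ((N - p + (j : ℕ)) / p) else 0) *
            ((if (k : ℕ) % q = (a : ℕ) then x ^ ((k : ℕ) / q) else 0) * L row k) := by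
        intro x
        rw [Matrix.mul_apply, Finset.sum_mul, Finset.sum_mul]
        refine Finset.sum_congr rfl fun k _ => ?_
        calc L row k * Xmat q N x k a * x ^ (N / p - 1) * frakX p (N % p) x j b
            = (x ^ (N / p - 1) * frakX p (N % p) x j b) * (Xmat q N x k a * L row k) := by
              ring
          _ = _ := by
              rw [frakX_mul_pow p N hp hpN x j b]
              simp only [Xmat, Matrix.of_apply]
      calc (∫ x : ℝ, (L * Xmat q N x) row a * x ^ (N / p - 1) *
            frakX p (N % p) x j b ∂ μ a b)
          = ∫ x : ℝ, ∑ k : Fin N,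
              (if (b : ℕ) = (N - p + (j : ℕ)) % p then x ^ ((N - p + (j : ℕ)) / p) else 0) *
              ((if (k : ℕ) % q = (a : ℕ) then x ^ ((k : ℕ) / q) else 0) * L row k) ∂ μ a b := by
            congr 1; ext x; exact hfun x
        _ = ∑ k : Fin N, ∫ x : ℝ,
              (if (b : ℕ) = (N - p + (j : ℕ)) % p then x ^ ((N - p + (j : ℕ)) / p) else 0) *
              ((if (k : ℕ) % q = (a : ℕ) then x ^ ((k : ℕ) / q) else 0) * L row k) ∂ μ a b :=
            integral_finset_sum _ (fun k _ => integrable_aux (μ a b) (hμ a b) _ _ _ _ _)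
        _ = _ := Finset.sum_congr rfl fun k _ => integral_aux (μ a b) (hμ a b) _ _ _ _ _
    rw [Finset.sum_congr rfl fun a _ => Finset.sum_congr rfl fun b _ => key a b,
      Matrix.mul_apply]
    set B : Fin p := ⟨(N - p + (j : ℕ)) % p, Nat.mod_lt _ hp⟩ with hB
    have step1 : (∑ a : Fin q, ∑ b : Fin p, ∑ k : Fin N,
        if (b : ℕ) = (N - p + (j : ℕ)) % p ∧ (k : ℕ) % q = (a : ℕ) then
          (∫ x : ℝ, x ^ ((N - p + (j : ℕ)) / p + (k : ℕ) / q) ∂ μ a b) * L row k else 0) =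
        ∑ a : Fin q, ∑ k : Fin N,
        if (k : ℕ) % q = (a : ℕ) then
          (∫ x : ℝ, x ^ ((N - p + (j : ℕ)) / p + (k : ℕ) / q) ∂ μ a B) * L row k else 0 := by
      refine Finset.sum_congr rfl fun a _ => ?_
      rw [Fintype.sum_eq_single B (fun b hb =>
        Finset.sum_eq_zero fun k _ => if_neg fun h => hb (Fin.ext h.1))]
      exact Finset.sum_congr rfl fun k _ => if_congr (and_iff_right rfl) rfl rfl
    have step2 : (∑ a : Fin q, ∑ k : Fin N,
        if (k : ℕ) % q = (a : ℕ) then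
          (∫ x : ℝ, x ^ ((N - p + (j : ℕ)) / p + (k : ℕ) / q) ∂ μ a B) * L row k else 0) =
        ∑ k : Fin N,
          (∫ x : ℝ, x ^ ((N - p + (j : ℕ)) / p + (k : ℕ) / q)
            ∂ μ ⟨(k : ℕ) % q, Nat.mod_lt _ hq⟩ B) * L row k := by
      rw [Finset.sum_comm]
      refine Finset.sum_congr rfl fun k _ => ?_
      rw [Fintype.sum_eq_single (⟨(k : ℕ) % q, Nat.mod_lt _ hq⟩ : Fin q)
        (fun a ha => if_neg fun h => ha (Fin.ext h.symm)), if_pos rfl]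
    rw [step1, step2]
    refine Finset.sum_congr rfl fun k _ => ?_
    rw [mul_comm]
    congr 1
    simp only [Mom, Matrix.of_apply]
    congr 1
    ext x
    ring
end
end

section
/- Assume 𝓜_N admits a Gauss–Borel factorization. Then the recursion matrix 𝓣_N is banded with q superdiagonals and p subdiagonals: (𝓣_N)_{i,j} = 0 whenever j > i + q or i > j + p. Moreover, if N ≥ q then the rectangular recursion matrix 𝓣^{[N−q,N]} satisfies (𝓣^{[N−q,N]})_{i,j} = 0 whenever j > i + q or i > j + p, and if N ≥ p then 𝓣^{[N,N−p]} satisfies the same band condition. -/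
open Matrix MeasureTheory

noncomputable section

/-- Leading principal submatrix of order `n` of an `N × N` matrix. -/
def lead (N n : ℕ) (h : n ≤ N) (A : Matrix (Fin N) (Fin N) ℝ) :
    Matrix (Fin n) (Fin n) ℝ :=
  A.submatrix (Fin.castLE h) (Fin.castLE h)

/-! ### Auxiliary lemmas -/

lemma Lam_mul_apply {r n M K : ℕ} (A : Matrix (Fin M) (Fin K) ℝ)
    (i : Fin n) (j : Fin K) (h : (i : ℕ) + r < M) :
    (Lam r n M * A) i j = A ⟨(i : ℕ) + r, h⟩ j := by
  rw [Matrix.mul_apply, Finset.sum_eq_single (⟨(i : ℕ) + r, h⟩ : Fin M)]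
  · simp [Lam]
  · intro b _ hb
    simp only [Lam, Matrix.of_apply]
    rw [if_neg (fun hc => hb (Fin.ext hc)), zero_mul]
  · simp

lemma mul_LamT_apply {r n M K : ℕ} (A : Matrix (Fin K) (Fin M) ℝ)
    (i : Fin K) (j : Fin n) (h : (j : ℕ) + r < M) :
    (A * (Lam r n M)ᵀ) i j = A i ⟨(j : ℕ) + r, h⟩ := by
  rw [Matrix.mul_apply, Finset.sum_eq_single (⟨(j : ℕ) + r, h⟩ : Fin M)]
  · simp [Lam]
  · intro b _ hb
    simp only [Lam, Matrix.transpose_apply, Matrix.of_apply]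
    rw [if_neg (fun hc => hb (Fin.ext hc)), mul_zero]
  · simp

lemma sum_castLE {n N : ℕ} (h : n ≤ N) (f : Fin N → ℝ)
    (hf : ∀ k : Fin N, n ≤ (k : ℕ) → f k = 0) :
    ∑ k : Fin n, f (Fin.castLE h k) = ∑ k : Fin N, f k := by
  classical
  set g : ℕ → ℝ := fun t => if ht : t < N then f ⟨t, ht⟩ else 0 with hg
  have h1 : ∑ k : Fin n, f (Fin.castLE h k) = ∑ t ∈ Finset.range n, g t := by
    rw [← Fin.sum_univ_eq_sum_range g n]
    apply Finset.sum_congr rfl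
    intro k _
    have hk : (k : ℕ) < N := lt_of_lt_of_le k.2 h
    simp only [hg, dif_pos hk]
    rfl
  have h2 : ∑ k : Fin N, f k = ∑ t ∈ Finset.range N, g t := by
    rw [← Fin.sum_univ_eq_sum_range g N]
    apply Finset.sum_congr rfl
    intro k _
    simp only [hg, dif_pos k.2]
  rw [h1, h2]
  apply Finset.sum_subset (Finset.range_subset_range.2 h)
  intro t ht hnt
  simp only [Finset.mem_range] at ht hnt
  simp only [hg, dif_pos ht]
  exact hf ⟨t, ht⟩ (le_of_not_gt hnt)

lemma inv_lower {N : ℕ} (L : Matrix (Fin N) (Fin N) ℝ)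
    (hLtri : ∀ i j : Fin N, i < j → L i j = 0) (hLunit : IsUnit L.det) :
    ∀ i j : Fin N, i < j → L⁻¹ i j = 0 := by
  have : Invertible L := L.invertibleOfIsUnitDet hLunit
  have hbt : L.BlockTriangular (fun i => -((i : ℕ) : ℤ)) := by
    intro i j hij
    refine hLtri i j ?_
    have h1 : -((j : ℕ) : ℤ) < -((i : ℕ) : ℤ) := hij
    exact Fin.lt_def.2 (by omega)
  have hres := Matrix.blockTriangular_inv_of_blockTriangular hbt
  intro i j hij
  have h' : (i : ℕ) < (j : ℕ) := hij
  exact hres (show -((j : ℕ) : ℤ) < -((i : ℕ) : ℤ) by omega)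

lemma inv_upper {N : ℕ} (U : Matrix (Fin N) (Fin N) ℝ)
    (hUtri : ∀ i j : Fin N, j < i → U i j = 0) (hUunit : IsUnit U.det) :
    ∀ i j : Fin N, j < i → U⁻¹ i j = 0 := by
  have : Invertible U := U.invertibleOfIsUnitDet hUunit
  have hbt : U.BlockTriangular (fun i => ((i : ℕ) : ℤ)) := by
    intro i j hij
    refine hUtri i j ?_
    have h1 : ((j : ℕ) : ℤ) < ((i : ℕ) : ℤ) := hij
    exact Fin.lt_def.2 (by omega)
  have hres := Matrix.blockTriangular_inv_of_blockTriangular hbt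
  intro i j hij
  have h' : (j : ℕ) < (i : ℕ) := hij
  exact hres (show ((j : ℕ) : ℤ) < ((i : ℕ) : ℤ) by omega)

/-- The moment entry as a function of natural indices. -/
def momE (q p : ℕ) (hq : 0 < q) (hp : 0 < p) (μ : Fin q → Fin p → Measure ℝ)
    (a b : ℕ) : ℝ :=
  ∫ x : ℝ, x ^ (a / q + b / p)
    ∂ μ ⟨a % q, Nat.mod_lt _ hq⟩ ⟨b % p, Nat.mod_lt _ hp⟩

lemma Mom_apply (q p : ℕ) (hq : 0 < q) (hp : 0 < p) (μ : Fin q → Fin p → Measure ℝ)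
    (N M : ℕ) (i : Fin N) (j : Fin M) :
    Mom q p hq hp μ N M i j = momE q p hq hp μ (i : ℕ) (j : ℕ) := rfl

lemma momE_shift (q p : ℕ) (hq : 0 < q) (hp : 0 < p) (μ : Fin q → Fin p → Measure ℝ)
    (a b : ℕ) : momE q p hq hp μ (a + q) b = momE q p hq hp μ a (b + p) := by
  unfold momE
  have h1 : (a + q) / q = a / q + 1 := Nat.add_div_right a hq
  have h2 : (a + q) % q = a % q := Nat.add_mod_right a q
  have h3 : (b + p) / p = b / p + 1 := Nat.add_div_right b hp
  have h4 : (b + p) % p = b % p := Nat.add_mod_right b p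
  simp only [h1, h2, h3, h4]
  have h5 : a / q + 1 + b / p = a / q + (b / p + 1) := by omega
  rw [h5]

lemma swap_sum {n m : ℕ} (a : Fin n → ℝ) (c : Fin n → Fin m → ℝ) (u : Fin m → ℝ) :
    ∑ j, (∑ k, a k * c k j) * u j = ∑ k, a k * ∑ j, c k j * u j := by
  simp_rw [Finset.sum_mul, Finset.mul_sum]
  rw [Finset.sum_comm]
  exact Finset.sum_congr rfl fun k _ => Finset.sum_congr rfl fun j _ => by ring

/-- Banded structure of the recursion matrices: `𝓣_N`, `𝓣^{[N−q,N]}` and `𝓣^{[N,N−p]}`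
have `q` superdiagonals and `p` subdiagonals. -/
theorem recursion_matrices_banded (p q N : ℕ) (hp : 0 < p) (hq : 0 < q)
    (μ : Fin q → Fin p → Measure ℝ)
    (hμ : ∀ (a : Fin q) (b : Fin p) (k : ℕ),
      Integrable (fun x : ℝ => |x| ^ k) (μ a b))
    (L U : Matrix (Fin N) (Fin N) ℝ)
    (hLtri : ∀ i j : Fin N, i < j → L i j = 0)
    (hUtri : ∀ i j : Fin N, j < i → U i j = 0)
    (hLunit : IsUnit L.det) (hUunit : IsUnit U.det)
    (hGB : Mom q p hq hp μ N N = L⁻¹ * U⁻¹) :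
    (∀ i j : Fin N, ((j : ℕ) > (i : ℕ) + q ∨ (i : ℕ) > (j : ℕ) + p) →
      (L * Lam q N (N + q) * Mom q p hq hp μ (N + q) N * U) i j = 0) ∧
    (q ≤ N → ∀ (i : Fin (N - q)) (j : Fin N),
      ((j : ℕ) > (i : ℕ) + q ∨ (i : ℕ) > (j : ℕ) + p) →
      (lead N (N - q) (Nat.sub_le N q) L * Lam q (N - q) N * L⁻¹) i j = 0) ∧
    (p ≤ N → ∀ (i : Fin N) (j : Fin (N - p)),
      ((j : ℕ) > (i : ℕ) + q ∨ (i : ℕ) > (j : ℕ) + p) →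
      (U⁻¹ * (Lam p (N - p) N)ᵀ * lead N (N - p) (Nat.sub_le N p) U) i j = 0) := by
  have hLinv := inv_lower L hLtri hLunit
  have hUinv := inv_upper U hUtri hUunit
  have hMU : Mom q p hq hp μ N N * U = L⁻¹ := by
    rw [hGB, Matrix.mul_assoc, Matrix.nonsing_inv_mul U hUunit, Matrix.mul_one]
  have hLM : L * Mom q p hq hp μ N N = U⁻¹ := by
    rw [hGB, ← Matrix.mul_assoc, Matrix.mul_nonsing_inv L hLunit, Matrix.one_mul]
  refine ⟨?_, ?_, ?_⟩
  · -- Part 1 : 𝓣_N is banded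
    intro i j hij
    have h1 : ∀ m : Fin N, (L * (Lam q N (N + q) * Mom q p hq hp μ (N + q) N)) i m
        = ∑ k : Fin N, L i k * momE q p hq hp μ ((k : ℕ) + q) (m : ℕ) := by
      intro m
      rw [Matrix.mul_apply]
      refine Finset.sum_congr rfl fun k _ => ?_
      rw [Lam_mul_apply _ k m (by have := k.isLt; omega)]
      rfl
    rw [Matrix.mul_assoc L, Matrix.mul_apply]
    have h2 : (∑ m : Fin N, (L * (Lam q N (N + q) * Mom q p hq hp μ (N + q) N)) i m * U m j)
        = ∑ m : Fin N, (∑ k : Fin N, L i k * momE q p hq hp μ ((k : ℕ) + q) (m : ℕ)) * U m j :=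
      Finset.sum_congr rfl fun m _ => by rw [h1]
    rw [h2]
    rcases hij with hu | hl
    · -- upper band
      rw [swap_sum]
      apply Finset.sum_eq_zero
      intro k _
      by_cases hk : (i : ℕ) < (k : ℕ)
      · rw [hLtri i k (Fin.lt_def.2 hk), zero_mul]
      · have hk' : (k : ℕ) ≤ (i : ℕ) := Nat.le_of_not_lt hk
        have hkN : (k : ℕ) + q < N := by have := j.isLt; omega
        have hs : (∑ m : Fin N, momE q p hq hp μ ((k : ℕ) + q) (m : ℕ) * U m j)
            = L⁻¹ ⟨(k : ℕ) + q, hkN⟩ j := by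
          rw [← hMU, Matrix.mul_apply]
          rfl
        rw [hs, hLinv _ j (Fin.lt_def.2 (by simp; omega)), mul_zero]
    · -- lower band
      apply Finset.sum_eq_zero
      intro m _
      by_cases hm : (j : ℕ) < (m : ℕ)
      · rw [hUtri m j (Fin.lt_def.2 hm), mul_zero]
      · have hm' : (m : ℕ) ≤ (j : ℕ) := Nat.le_of_not_lt hm
        have hmN : (m : ℕ) + p < N := by have := i.isLt; omega
        have hs : (∑ k : Fin N, L i k * momE q p hq hp μ ((k : ℕ) + q) (m : ℕ))
            = U⁻¹ i ⟨(m : ℕ) + p, hmN⟩ := by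
          rw [← hLM, Matrix.mul_apply]
          refine Finset.sum_congr rfl fun k _ => ?_
          rw [momE_shift]
          rfl
        rw [hs, hUinv i _ (Fin.lt_def.2 (by simp; omega)), zero_mul]
  · -- Part 2 : 𝓣^{[N-q,N]} is banded
    intro hqN i j hij
    rw [Matrix.mul_assoc, Matrix.mul_apply]
    rcases hij with hu | hl
    · -- upper band
      apply Finset.sum_eq_zero
      intro k _
      rw [Lam_mul_apply _ k j (show (k : ℕ) + q < N by have := k.isLt; omega)]
      by_cases hk : (i : ℕ) < (k : ℕ)
      · have : lead N (N - q) (Nat.sub_le N q) L i k = 0 :=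
          hLtri _ _ (Fin.lt_def.2 (by simpa using hk))
        rw [this, zero_mul]
      · have hk' : (k : ℕ) ≤ (i : ℕ) := Nat.le_of_not_lt hk
        rw [hLinv _ j (Fin.lt_def.2 (by simp; omega)), mul_zero]
    · -- lower band
      have h1 : ∀ k : Fin (N - q), (Lam q (N - q) N * L⁻¹) k j
          = ∑ m : Fin N, momE q p hq hp μ (k : ℕ) ((m : ℕ) + p) * U m j := by
        intro k
        rw [Lam_mul_apply _ k j (show (k : ℕ) + q < N by have := k.isLt; omega),
          ← hMU, Matrix.mul_apply]
        refine Finset.sum_congr rfl fun m _ => ?_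
        show momE q p hq hp μ ((k : ℕ) + q) (m : ℕ) * U m j = _
        rw [momE_shift]
      have h2 : (∑ k : Fin (N - q), lead N (N - q) (Nat.sub_le N q) L i k
            * (Lam q (N - q) N * L⁻¹) k j)
          = ∑ m : Fin N, (∑ k : Fin (N - q), lead N (N - q) (Nat.sub_le N q) L i k
            * momE q p hq hp μ (k : ℕ) ((m : ℕ) + p)) * U m j := by
        rw [swap_sum]
        exact Finset.sum_congr rfl fun k _ => by rw [h1]
      rw [h2]
      apply Finset.sum_eq_zero
      intro m _
      by_cases hm : (j : ℕ) < (m : ℕ)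
      · rw [hUtri m j (Fin.lt_def.2 hm), mul_zero]
      · have hm' : (m : ℕ) ≤ (j : ℕ) := Nat.le_of_not_lt hm
        have hmN : (m : ℕ) + p < N := by have := i.isLt; omega
        have hs : (∑ k : Fin (N - q), lead N (N - q) (Nat.sub_le N q) L i k
              * momE q p hq hp μ (k : ℕ) ((m : ℕ) + p))
            = U⁻¹ (Fin.castLE (Nat.sub_le N q) i) ⟨(m : ℕ) + p, hmN⟩ := by
          rw [← hLM, Matrix.mul_apply]
          exact sum_castLE (Nat.sub_le N q)
            (fun k => L (Fin.castLE (Nat.sub_le N q) i) k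
              * momE q p hq hp μ (k : ℕ) ((m : ℕ) + p))
            (fun k hk => by
              rw [hLtri _ k (Fin.lt_def.2 (by simp; have := i.isLt; omega)), zero_mul])
        rw [hs, hUinv _ _ (Fin.lt_def.2 (by simp; omega)), zero_mul]
  · -- Part 3 : 𝓣^{[N,N-p]} is banded
    intro hpN i j hij
    rw [Matrix.mul_apply]
    rcases hij with hu | hl
    · -- upper band
      have h1 : ∀ l : Fin (N - p), (U⁻¹ * (Lam p (N - p) N)ᵀ) i l
          = ∑ k : Fin N, L i k * momE q p hq hp μ ((k : ℕ) + q) (l : ℕ) := by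
        intro l
        rw [mul_LamT_apply _ i l (show (l : ℕ) + p < N by have := l.isLt; omega),
          ← hLM, Matrix.mul_apply]
        refine Finset.sum_congr rfl fun k _ => ?_
        rw [momE_shift]
        rfl
      have h2 : (∑ l : Fin (N - p), (U⁻¹ * (Lam p (N - p) N)ᵀ) i l
            * lead N (N - p) (Nat.sub_le N p) U l j)
          = ∑ k : Fin N, L i k * ∑ l : Fin (N - p),
            momE q p hq hp μ ((k : ℕ) + q) (l : ℕ)
              * lead N (N - p) (Nat.sub_le N p) U l j := by
        rw [← swap_sum]
        exact Finset.sum_congr rfl fun l _ => by rw [h1]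
      rw [h2]
      apply Finset.sum_eq_zero
      intro k _
      by_cases hk : (i : ℕ) < (k : ℕ)
      · rw [hLtri i k (Fin.lt_def.2 hk), zero_mul]
      · have hk' : (k : ℕ) ≤ (i : ℕ) := Nat.le_of_not_lt hk
        have hkN : (k : ℕ) + q < N := by have := j.isLt; omega
        have hs : (∑ l : Fin (N - p), momE q p hq hp μ ((k : ℕ) + q) (l : ℕ)
              * lead N (N - p) (Nat.sub_le N p) U l j)
            = L⁻¹ ⟨(k : ℕ) + q, hkN⟩ (Fin.castLE (Nat.sub_le N p) j) := by
          rw [← hMU, Matrix.mul_apply]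
          exact sum_castLE (Nat.sub_le N p)
            (fun l => momE q p hq hp μ ((k : ℕ) + q) (l : ℕ)
              * U l (Fin.castLE (Nat.sub_le N p) j))
            (fun l hlge => by
              rw [hUtri l _ (Fin.lt_def.2 (by simp; have := j.isLt; omega)), mul_zero])
        rw [hs, hLinv _ _ (Fin.lt_def.2 (by simp; omega)), mul_zero]
    · -- lower band
      apply Finset.sum_eq_zero
      intro l _
      by_cases hlj : (j : ℕ) < (l : ℕ)
      · have : lead N (N - p) (Nat.sub_le N p) U l j = 0 :=
          hUtri _ _ (Fin.lt_def.2 (by simpa using hlj))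
        rw [this, mul_zero]
      · have hl' : (l : ℕ) ≤ (j : ℕ) := Nat.le_of_not_lt hlj
        rw [mul_LamT_apply _ i l (show (l : ℕ) + p < N by have := l.isLt; omega)]
        rw [hUinv i _ (Fin.lt_def.2 (by simp; omega)), zero_mul]
end
end

section
/- Assume 𝓜_N admits a Gauss–Borel factorization and N ≥ max(p,q). Then the rectangular recursion matrices admit the two representations: 𝓛_{N−q} Λ^{[N−q,N]}_{[q]} 𝓛_N^{-1} = 𝓛_{N−q} 𝓜^{[N−q,N+p]} (Λ^{[N,N+p]}_{[p]})^T 𝓤_N, and 𝓤_N^{-1} (Λ^{[N−p,N]}_{[p]})^T 𝓤_{N−p} = 𝓛_N Λ^{[N,N+q]}_{[q]} 𝓜^{[N+q,N−p]} 𝓤_{N−p}. -/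
open Matrix MeasureTheory

noncomputable section

lemma lam_mul {a b c : ℕ} (r : ℕ) (M : Matrix (Fin b) (Fin c) ℝ)
    (h : ∀ i : Fin a, (i:ℕ) + r < b) (i : Fin a) (j : Fin c) :
    (Lam r a b * M) i j = M ⟨(i:ℕ) + r, h i⟩ j := by
  simp only [Matrix.mul_apply, Lam, Matrix.of_apply, ite_mul, one_mul, zero_mul]
  have : ∀ k : Fin b, ((k:ℕ) = (i:ℕ) + r) = (k = ⟨(i:ℕ)+r, h i⟩) := by
    intro k; simp [Fin.ext_iff]
  simp_rw [this]
  simp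

lemma mul_lamT {a b c : ℕ} (r : ℕ) (M : Matrix (Fin a) (Fin b) ℝ)
    (h : ∀ j : Fin c, (j:ℕ) + r < b) (i : Fin a) (j : Fin c) :
    (M * (Lam r c b)ᵀ) i j = M i ⟨(j:ℕ) + r, h j⟩ := by
  simp only [Matrix.mul_apply, Lam, Matrix.transpose_apply, Matrix.of_apply, mul_ite,
    mul_one, mul_zero]
  have : ∀ k : Fin b, ((k:ℕ) = (j:ℕ) + r) = (k = ⟨(j:ℕ)+r, h j⟩) := by
    intro k; simp [Fin.ext_iff]
  simp_rw [this]
  simp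

lemma mom_shift (q p : ℕ) (hq : 0 < q) (hp : 0 < p) (μ : Fin q → Fin p → Measure ℝ)
    {a b c d : ℕ} (i : Fin a) (j : Fin b) (h1 : (i:ℕ) + q < c) (h2 : (j:ℕ) + p < d) :
    Mom q p hq hp μ c b ⟨(i:ℕ) + q, h1⟩ j = Mom q p hq hp μ a d i ⟨(j:ℕ) + p, h2⟩ := by
  simp only [Mom, Matrix.of_apply, Nat.add_div_right _ hq, Nat.add_div_right _ hp,
    Nat.add_mod_right]
  congr 1
  ext x
  congr 1
  omega

/-- Two representations of the rectangular recursion matrices: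
`𝓛_{N−q} Λ^{[N−q,N]}_{[q]} 𝓛_N⁻¹ = 𝓛_{N−q} 𝓜^{[N−q,N+p]} (Λ^{[N,N+p]}_{[p]})ᵀ 𝓤_N` and
`𝓤_N⁻¹ (Λ^{[N−p,N]}_{[p]})ᵀ 𝓤_{N−p} = 𝓛_N Λ^{[N,N+q]}_{[q]} 𝓜^{[N+q,N−p]} 𝓤_{N−p}`. -/
theorem recursion_matrices_two_representations (p q N : ℕ) (hp : 0 < p) (hq : 0 < q)
    (hpN : p ≤ N) (hqN : q ≤ N)
    (μ : Fin q → Fin p → Measure ℝ)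
    (hμ : ∀ (a : Fin q) (b : Fin p) (k : ℕ),
      Integrable (fun x : ℝ => |x| ^ k) (μ a b))
    (L U : Matrix (Fin N) (Fin N) ℝ)
    (hLtri : ∀ i j : Fin N, i < j → L i j = 0)
    (hUtri : ∀ i j : Fin N, j < i → U i j = 0)
    (hLunit : IsUnit L.det) (hUunit : IsUnit U.det)
    (hGB : Mom q p hq hp μ N N = L⁻¹ * U⁻¹) :
    (lead N (N - q) (Nat.sub_le N q) L * Lam q (N - q) N * L⁻¹ =
      lead N (N - q) (Nat.sub_le N q) L * Mom q p hq hp μ (N - q) (N + p) *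
        (Lam p N (N + p))ᵀ * U) ∧
    (U⁻¹ * (Lam p (N - p) N)ᵀ * lead N (N - p) (Nat.sub_le N p) U =
      L * Lam q N (N + q) * Mom q p hq hp μ (N + q) (N - p) *
        lead N (N - p) (Nat.sub_le N p) U) := by
  have hMU : Mom q p hq hp μ N N * U = L⁻¹ := by
    rw [hGB, Matrix.mul_assoc, Matrix.nonsing_inv_mul U hUunit, Matrix.mul_one]
  have hLM : L * Mom q p hq hp μ N N = U⁻¹ := by
    rw [hGB, ← Matrix.mul_assoc, Matrix.mul_nonsing_inv L hLunit, Matrix.one_mul]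
  have hA : Lam q (N - q) N * Mom q p hq hp μ N N =
      Mom q p hq hp μ (N - q) (N + p) * (Lam p N (N + p))ᵀ := by
    ext i j
    rw [lam_mul q _ (fun i => by omega), mul_lamT p _ (fun j => by omega)]
    exact mom_shift q p hq hp μ i j _ _
  have hB : Mom q p hq hp μ N N * (Lam p (N - p) N)ᵀ =
      Lam q N (N + q) * Mom q p hq hp μ (N + q) (N - p) := by
    ext i j
    rw [mul_lamT p _ (fun j => by omega), lam_mul q _ (fun i => by omega)]
    exact (mom_shift q p hq hp μ i j _ _).symm
  constructor
  · rw [Matrix.mul_assoc, ← hMU, ← Matrix.mul_assoc (Lam q (N - q) N), hA,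
      Matrix.mul_assoc, Matrix.mul_assoc, ← Matrix.mul_assoc]
  · rw [← hLM, Matrix.mul_assoc L, hB, ← Matrix.mul_assoc, Matrix.mul_assoc, ← Matrix.mul_assoc]
end
end

section
/- Assume 𝓜_N admits a Gauss–Borel factorization and N ≥ max(p,q). Then for all x ∈ ℝ the recursion relations hold: 𝓣^{[N−q,N]} · B^{[N]}(x) = x · B^{[N−q]}(x), where B^{[N−q]}(x) := 𝓛_{N−q} X^{[N−q]}_{[q]}(x), and A^{[N]}(x) · 𝓣^{[N,N−p]} = x · A^{[N−p]}(x), where A^{[N−p]}(x) := (X^{[N−p]}_{[p]}(x))^T 𝓤_{N−p}. -/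
open Matrix MeasureTheory

noncomputable section

lemma lam_mul_xmat (r N : ℕ) (hr : 0 < r) (hrN : r ≤ N) (x : ℝ) :
    Lam r (N - r) N * Xmat r N x = x • Xmat r (N - r) x := by
  ext i s
  have hiN : (i : ℕ) + r < N := by
    have := i.isLt
    omega
  rw [Matrix.mul_apply]
  rw [Finset.sum_eq_single (⟨(i : ℕ) + r, hiN⟩ : Fin N)]
  · simp [Lam, Xmat, Nat.add_mod_right, Nat.add_div_right _ hr, pow_succ, mul_comm]
  · intro j _ hj
    have : (j : ℕ) ≠ (i : ℕ) + r := fun h => hj (Fin.ext h)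
    simp [Lam, this]
  · simp

/-- Recursion relations modelled by the rectangular recursion matrices:
`𝓣^{[N−q,N]} B^{[N]}(x) = x B^{[N−q]}(x)` and `A^{[N]}(x) 𝓣^{[N,N−p]} = x A^{[N−p]}(x)`. -/
theorem recursion_relations (p q N : ℕ) (hp : 0 < p) (hq : 0 < q)
    (hpN : p ≤ N) (hqN : q ≤ N)
    (μ : Fin q → Fin p → Measure ℝ)
    (hμ : ∀ (a : Fin q) (b : Fin p) (k : ℕ),
      Integrable (fun x : ℝ => |x| ^ k) (μ a b))
    (L U : Matrix (Fin N) (Fin N) ℝ)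
    (hLtri : ∀ i j : Fin N, i < j → L i j = 0)
    (hUtri : ∀ i j : Fin N, j < i → U i j = 0)
    (hLunit : IsUnit L.det) (hUunit : IsUnit U.det)
    (hGB : Mom q p hq hp μ N N = L⁻¹ * U⁻¹) :
    (∀ x : ℝ,
      lead N (N - q) (Nat.sub_le N q) L * Lam q (N - q) N * L⁻¹ * (L * Xmat q N x) =
        x • (lead N (N - q) (Nat.sub_le N q) L * Xmat q (N - q) x)) ∧
    (∀ x : ℝ,
      (Xmat p N x)ᵀ * U *
          (U⁻¹ * (Lam p (N - p) N)ᵀ * lead N (N - p) (Nat.sub_le N p) U) =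
        x • ((Xmat p (N - p) x)ᵀ * lead N (N - p) (Nat.sub_le N p) U)) := by
  have hL : L⁻¹ * L = 1 := nonsing_inv_mul L hLunit
  have hU : U * U⁻¹ = 1 := mul_nonsing_inv U hUunit
  constructor
  · intro x
    calc lead N (N - q) (Nat.sub_le N q) L * Lam q (N - q) N * L⁻¹ * (L * Xmat q N x)
        = lead N (N - q) (Nat.sub_le N q) L * (Lam q (N - q) N * ((L⁻¹ * L) * Xmat q N x)) := by
          simp only [Matrix.mul_assoc]
      _ = lead N (N - q) (Nat.sub_le N q) L * (Lam q (N - q) N * Xmat q N x) := by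
          rw [hL, Matrix.one_mul]
      _ = x • (lead N (N - q) (Nat.sub_le N q) L * Xmat q (N - q) x) := by
          rw [lam_mul_xmat q N hq hqN x, Matrix.mul_smul]
  · intro x
    calc (Xmat p N x)ᵀ * U * (U⁻¹ * (Lam p (N - p) N)ᵀ * lead N (N - p) (Nat.sub_le N p) U)
        = (Xmat p N x)ᵀ * ((U * U⁻¹) * ((Lam p (N - p) N)ᵀ * lead N (N - p) (Nat.sub_le N p) U)) := by
          simp only [Matrix.mul_assoc]
      _ = (Xmat p N x)ᵀ * (Lam p (N - p) N)ᵀ * lead N (N - p) (Nat.sub_le N p) U := by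
          rw [hU, Matrix.one_mul, Matrix.mul_assoc]
      _ = (Lam p (N - p) N * Xmat p N x)ᵀ * lead N (N - p) (Nat.sub_le N p) U := by
          rw [Matrix.transpose_mul]
      _ = x • ((Xmat p (N - p) x)ᵀ * lead N (N - p) (Nat.sub_le N p) U) := by
          rw [lam_mul_xmat p N hp hpN x, Matrix.transpose_smul, Matrix.smul_mul]
end
end

section
/- Assume 𝓜_N and all the Christoffel-perturbed moment matrices 𝓜_{N,(b,0)} for b = 1,…,q and 𝓜_{N,(0,a)} for a = 1,…,p admit Gauss–Borel factorizations with lower unitriangular factors. Then each U_b (1 ≤ b ≤ q) is upper bidiagonal with unit superdiagonal, i.e. (U_b)_{i,j} = 0 unless j = i or j = i+1 and (U_b)_{i,i+1} = 1 for 0 ≤ i ≤ N−2; each L_a (1 ≤ a ≤ p) is lower bidiagonal and unitriangular, i.e. (L_a)_{i,i} = 1 and (L_a)_{i,j} = 0 unless j = i or j = i−1; and the recursion matrix admits the bidiagonal factorization 𝓣_N = L_1 · L_2 ⋯ L_p · U_q · U_{q−1} ⋯ U_1. -/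
open Matrix MeasureTheory

noncomputable section

/-- Christoffel-perturbed moment matrix `𝓜_{N,(n,m)}`. -/
def MomC (q p : ℕ) (hq : 0 < q) (hp : 0 < p) (μ : Fin q → Fin p → Measure ℝ)
    (N n m : ℕ) : Matrix (Fin N) (Fin N) ℝ :=
  Matrix.of fun i j =>
    ∑ a : Fin q, ∑ b : Fin p,
      ∫ x : ℝ, (Xmat q N x * frakX q 1 x ^ n) i a *
        (Xmat p N x * frakX p 1 x ^ m) j b ∂ μ a b

namespace BidiagAux

variable {N : ℕ}

/-- determinant of a unit lower triangular matrix is 1 -/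
lemma lo_det_one (L : Matrix (Fin N) (Fin N) ℝ)
    (h : ∀ i j : Fin N, i < j → L i j = 0) (hd : ∀ i, L i i = 1) : IsUnit L.det := by
  rw [Matrix.det_of_lowerTriangular L (fun i j hij => h i j hij)]
  simp [hd]

lemma lo_mul (A B : Matrix (Fin N) (Fin N) ℝ)
    (hA : ∀ i j : Fin N, i < j → A i j = 0) (hB : ∀ i j : Fin N, i < j → B i j = 0) :
    ∀ i j : Fin N, i < j → (A * B) i j = 0 := by
  intro i j hij
  rw [Matrix.mul_apply]
  refine Finset.sum_eq_zero fun k _ => ?_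
  by_cases h : i < k
  · rw [hA i k h, zero_mul]
  · rw [hB k j (lt_of_le_of_lt (not_lt.mp h) hij), mul_zero]

lemma up_mul (A B : Matrix (Fin N) (Fin N) ℝ)
    (hA : ∀ i j : Fin N, j < i → A i j = 0) (hB : ∀ i j : Fin N, j < i → B i j = 0) :
    ∀ i j : Fin N, j < i → (A * B) i j = 0 := by
  intro i j hij
  rw [Matrix.mul_apply]
  refine Finset.sum_eq_zero fun k _ => ?_
  by_cases h : k < i
  · rw [hA i k h, zero_mul]
  · rw [hB k j (lt_of_lt_of_le hij (not_lt.mp h)), mul_zero]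

lemma lo_diag_mul (A B : Matrix (Fin N) (Fin N) ℝ)
    (hA : ∀ i j : Fin N, i < j → A i j = 0) (hB : ∀ i j : Fin N, i < j → B i j = 0) :
    ∀ i : Fin N, (A * B) i i = A i i * B i i := by
  intro i
  rw [Matrix.mul_apply]
  refine Finset.sum_eq_single i (fun k _ hk => ?_) (fun h => absurd (Finset.mem_univ _) h)
  rcases lt_or_gt_of_ne hk with h | h
  · rw [hB k i h, mul_zero]
  · rw [hA i k h, zero_mul]

lemma inv_lo (L : Matrix (Fin N) (Fin N) ℝ)
    (hlo : ∀ i j : Fin N, i < j → L i j = 0) (hd : ∀ i, L i i = 1) :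
    (∀ i j : Fin N, i < j → L⁻¹ i j = 0) ∧ (∀ i : Fin N, L⁻¹ i i = 1) := by
  have hdet : IsUnit L.det := lo_det_one L hlo hd
  haveI := L.invertibleOfIsUnitDet hdet
  have hBT : BlockTriangular L (OrderDual.toDual : Fin N → (Fin N)ᵒᵈ) :=
    fun i j h => hlo i j h
  have hBTi := Matrix.blockTriangular_inv_of_blockTriangular hBT
  have hloInv : ∀ i j : Fin N, i < j → L⁻¹ i j = 0 := fun i j h => hBTi h
  refine ⟨hloInv, fun i => ?_⟩
  have h1 : (L⁻¹ * L) i i = 1 := by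
    rw [Matrix.nonsing_inv_mul L hdet, Matrix.one_apply_eq]
  rw [lo_diag_mul L⁻¹ L hloInv hlo, hd, mul_one] at h1
  exact h1

lemma inv_up (U : Matrix (Fin N) (Fin N) ℝ)
    (hup : ∀ i j : Fin N, j < i → U i j = 0) (hdet : IsUnit U.det) :
    ∀ i j : Fin N, j < i → U⁻¹ i j = 0 := by
  haveI := U.invertibleOfIsUnitDet hdet
  have hBT : BlockTriangular U (id : Fin N → Fin N) := fun i j h => hup i j h
  have hBTi := Matrix.blockTriangular_inv_of_blockTriangular hBT
  exact fun i j h => hBTi h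

/-- uniqueness of the LU factorization with unit lower factor -/
lemma lu_unique (L₁ U₁ L₂ U₂ : Matrix (Fin N) (Fin N) ℝ)
    (hL₁ : ∀ i j : Fin N, i < j → L₁ i j = 0) (hL₁d : ∀ i, L₁ i i = 1)
    (hU₁ : ∀ i j : Fin N, j < i → U₁ i j = 0) (hU₁det : IsUnit U₁.det)
    (hL₂ : ∀ i j : Fin N, i < j → L₂ i j = 0) (hL₂d : ∀ i, L₂ i i = 1)
    (hU₂ : ∀ i j : Fin N, j < i → U₂ i j = 0) (hU₂det : IsUnit U₂.det)
    (h : L₁⁻¹ * U₁⁻¹ = L₂⁻¹ * U₂⁻¹) : L₁ = L₂ := by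
  have hL₁det : IsUnit L₁.det := lo_det_one L₁ hL₁ hL₁d
  have hL₂det : IsUnit L₂.det := lo_det_one L₂ hL₂ hL₂d
  have hD2 : L₂ * L₁⁻¹ = U₂⁻¹ * U₁ := by
    calc L₂ * L₁⁻¹ = L₂ * ((L₁⁻¹ * U₁⁻¹) * U₁) := by
          rw [Matrix.mul_assoc, Matrix.nonsing_inv_mul U₁ hU₁det, Matrix.mul_one]
      _ = L₂ * ((L₂⁻¹ * U₂⁻¹) * U₁) := by rw [h]
      _ = U₂⁻¹ * U₁ := by
          rw [← Matrix.mul_assoc, ← Matrix.mul_assoc,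
            Matrix.mul_nonsing_inv L₂ hL₂det, Matrix.one_mul]
  have hDlo : ∀ i j : Fin N, i < j → (L₂ * L₁⁻¹) i j = 0 :=
    lo_mul L₂ L₁⁻¹ hL₂ (inv_lo L₁ hL₁ hL₁d).1
  have hDup : ∀ i j : Fin N, j < i → (L₂ * L₁⁻¹) i j = 0 := by
    rw [hD2]
    exact up_mul U₂⁻¹ U₁ (inv_up U₂ hU₂ hU₂det) hU₁
  have hDL : L₂ * L₁⁻¹ * L₁ = L₂ := by
    rw [Matrix.mul_assoc, Matrix.nonsing_inv_mul L₁ hL₁det, Matrix.mul_one]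
  have hDd : ∀ i : Fin N, (L₂ * L₁⁻¹) i i = 1 := by
    intro i
    have := congrArg (fun M => M i i) hDL
    rw [lo_diag_mul _ L₁ hDlo hL₁, hL₁d, mul_one] at this
    rw [this, hL₂d]
  have hD1 : L₂ * L₁⁻¹ = 1 := by
    ext i j
    rcases lt_trichotomy i j with hij | hij | hij
    · rw [hDlo i j hij, Matrix.one_apply_ne (ne_of_lt hij)]
    · subst hij; rw [hDd, Matrix.one_apply_eq]
    · rw [hDup i j hij, Matrix.one_apply_ne (ne_of_gt hij)]
  have := congrArg (fun M => M * L₁) hD1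
  simpa [Matrix.mul_assoc, Matrix.nonsing_inv_mul L₁ hL₁det] using this.symm


variable {N : ℕ}
lemma lam_one_mul (C : Matrix (Fin N) (Fin N) ℝ) (k j : Fin N) (h : (k:ℕ)+1 < N) :
    (Lam 1 N N * C) k j = C ⟨(k:ℕ)+1, h⟩ j := by
  rw [Matrix.mul_apply]
  rw [Finset.sum_eq_single (⟨(k:ℕ)+1, h⟩ : Fin N)]
  · simp [Lam]
  · intro m _ hm
    simp only [Lam, Matrix.of_apply]
    rw [if_neg fun hmk => hm (Fin.ext hmk), zero_mul]
  · exact fun h' => absurd (Finset.mem_univ _) h'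

lemma lam_one_mul_zero (C : Matrix (Fin N) (Fin N) ℝ) (k j : Fin N) (h : ¬ (k:ℕ)+1 < N) :
    (Lam 1 N N * C) k j = 0 := by
  rw [Matrix.mul_apply]
  refine Finset.sum_eq_zero fun m _ => ?_
  simp only [Lam, Matrix.of_apply]
  rw [if_neg fun hmk => h (by rw [← hmk]; exact m.isLt), zero_mul]

/-- the key decomposition `U₁⁻¹ U₀ = L₁ Λ L₀⁻¹ + L₁ E U₀` -/
lemma decomp (G₀ G₁ L₀ L₁ U₀ U₁ : Matrix (Fin N) (Fin N) ℝ)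
    (hL₁det : IsUnit L₁.det) (hU₀det : IsUnit U₀.det)
    (hG₀ : G₀ = L₀⁻¹ * U₀⁻¹) (hG₁ : G₁ = L₁⁻¹ * U₁⁻¹) :
    U₁⁻¹ * U₀ =
      L₁ * (Lam 1 N N * L₀⁻¹) + L₁ * ((G₁ - Lam 1 N N * G₀) * U₀) := by
  have hG₀U₀ : G₀ * U₀ = L₀⁻¹ := by
    rw [hG₀, Matrix.mul_assoc, Matrix.nonsing_inv_mul U₀ hU₀det, Matrix.mul_one]
  calc U₁⁻¹ * U₀ = L₁ * (L₁⁻¹ * (U₁⁻¹ * U₀)) := by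
        rw [← Matrix.mul_assoc, Matrix.mul_nonsing_inv L₁ hL₁det, Matrix.one_mul]
    _ = L₁ * (G₁ * U₀) := by rw [hG₁, Matrix.mul_assoc]
    _ = L₁ * ((Lam 1 N N * G₀ + (G₁ - Lam 1 N N * G₀)) * U₀) := by
        rw [add_sub_cancel]
    _ = _ := by
        rw [Matrix.add_mul, Matrix.mul_add, Matrix.mul_assoc (Lam 1 N N) G₀ U₀, hG₀U₀]

lemma remainder_zero (G₀ G₁ L₁ U₀ : Matrix (Fin N) (Fin N) ℝ)
    (hL₁lo : ∀ i j : Fin N, i < j → L₁ i j = 0)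
    (hshift : ∀ (k : Fin N) (h : (k:ℕ)+1 < N) (l : Fin N), G₁ k l = G₀ ⟨(k:ℕ)+1, h⟩ l)
    (i j : Fin N) (hi : (i:ℕ)+1 < N) :
    (L₁ * ((G₁ - Lam 1 N N * G₀) * U₀)) i j = 0 := by
  rw [Matrix.mul_apply]
  refine Finset.sum_eq_zero fun m _ => ?_
  by_cases hm : (m:ℕ)+1 < N
  · have hrow : ((G₁ - Lam 1 N N * G₀) * U₀) m j = 0 := by
      rw [Matrix.mul_apply]
      refine Finset.sum_eq_zero fun l _ => ?_
      rw [Matrix.sub_apply, lam_one_mul G₀ m l hm, hshift m hm l, sub_self, zero_mul]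
    rw [hrow, mul_zero]
  · have him : i < m := by
      have := m.isLt
      rw [Fin.lt_def]
      omega
    rw [hL₁lo i m him, zero_mul]

lemma band_zero (G₀ G₁ L₀ L₁ U₀ U₁ : Matrix (Fin N) (Fin N) ℝ)
    (hL₀lo : ∀ i j : Fin N, i < j → L₀ i j = 0) (hL₀det : IsUnit L₀.det)
    (hL₁lo : ∀ i j : Fin N, i < j → L₁ i j = 0) (hL₁det : IsUnit L₁.det)
    (hU₀up : ∀ i j : Fin N, j < i → U₀ i j = 0) (hU₀det : IsUnit U₀.det)
    (hU₁up : ∀ i j : Fin N, j < i → U₁ i j = 0) (hU₁det : IsUnit U₁.det)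
    (hG₀ : G₀ = L₀⁻¹ * U₀⁻¹) (hG₁ : G₁ = L₁⁻¹ * U₁⁻¹)
    (hshift : ∀ (k : Fin N) (h : (k:ℕ)+1 < N) (l : Fin N), G₁ k l = G₀ ⟨(k:ℕ)+1, h⟩ l)
    (i j : Fin N) (hij : (j:ℕ) < (i:ℕ) ∨ (i:ℕ)+1 < (j:ℕ)) :
    (U₁⁻¹ * U₀) i j = 0 := by
  rcases hij with hij | hij
  · exact up_mul U₁⁻¹ U₀ (inv_up U₁ hU₁up hU₁det) hU₀up i j hij
  · haveI := L₀.invertibleOfIsUnitDet hL₀det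
    have hL₀inv : ∀ i j : Fin N, i < j → L₀⁻¹ i j = 0 := by
      have hBT : BlockTriangular L₀ (OrderDual.toDual : Fin N → (Fin N)ᵒᵈ) :=
        fun i j h => hL₀lo i j h
      exact fun i j h => Matrix.blockTriangular_inv_of_blockTriangular hBT h
    rw [decomp G₀ G₁ L₀ L₁ U₀ U₁ hL₁det hU₀det hG₀ hG₁, Matrix.add_apply,
      remainder_zero G₀ G₁ L₁ U₀ hL₁lo hshift i j (by omega), add_zero,
      Matrix.mul_apply]
    refine Finset.sum_eq_zero fun k _ => ?_
    by_cases hk : i < k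
    · rw [hL₁lo i k hk, zero_mul]
    · have hkN : (k:ℕ)+1 < N := by
        have hki : (k:ℕ) ≤ (i:ℕ) := not_lt.mp hk
        have := j.isLt
        omega
      rw [lam_one_mul L₀⁻¹ k j hkN, hL₀inv ⟨(k:ℕ)+1, hkN⟩ j (by
        show ((k:ℕ)+1) < (j:ℕ)
        have hki : (k:ℕ) ≤ (i:ℕ) := not_lt.mp hk
        omega), mul_zero]

lemma band_one (G₀ G₁ L₀ L₁ U₀ U₁ : Matrix (Fin N) (Fin N) ℝ)
    (hL₀lo : ∀ i j : Fin N, i < j → L₀ i j = 0) (hL₀d : ∀ i, L₀ i i = 1)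
    (hL₁lo : ∀ i j : Fin N, i < j → L₁ i j = 0) (hL₁d : ∀ i, L₁ i i = 1)
    (hU₀det : IsUnit U₀.det)
    (hG₀ : G₀ = L₀⁻¹ * U₀⁻¹) (hG₁ : G₁ = L₁⁻¹ * U₁⁻¹)
    (hshift : ∀ (k : Fin N) (h : (k:ℕ)+1 < N) (l : Fin N), G₁ k l = G₀ ⟨(k:ℕ)+1, h⟩ l)
    (i j : Fin N) (hij : (j:ℕ) = (i:ℕ)+1) :
    (U₁⁻¹ * U₀) i j = 1 := by
  have hL₁det : IsUnit L₁.det := lo_det_one L₁ hL₁lo hL₁d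
  have hiN : (i:ℕ)+1 < N := by have := j.isLt; omega
  have hL₀inv := inv_lo L₀ hL₀lo hL₀d
  rw [decomp G₀ G₁ L₀ L₁ U₀ U₁ hL₁det hU₀det hG₀ hG₁, Matrix.add_apply,
    remainder_zero G₀ G₁ L₁ U₀ hL₁lo hshift i j hiN, add_zero, Matrix.mul_apply]
  rw [Finset.sum_eq_single i (fun k _ hk => ?_) (fun h => absurd (Finset.mem_univ _) h)]
  · rw [hL₁d, lam_one_mul L₀⁻¹ i j hiN, one_mul]
    have : j = ⟨(i:ℕ)+1, hiN⟩ := Fin.ext hij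
    rw [this, hL₀inv.2]
  · rcases lt_or_gt_of_ne hk with h | h
    · by_cases hkN : (k:ℕ)+1 < N
      · rw [lam_one_mul L₀⁻¹ k j hkN, hL₀inv.1 ⟨(k:ℕ)+1, hkN⟩ j (by
          show ((k:ℕ)+1) < (j:ℕ)
          have : (k:ℕ) < (i:ℕ) := h
          omega), mul_zero]
      · rw [lam_one_mul_zero L₀⁻¹ k j hkN, mul_zero]
    · rw [hL₁lo i k h, zero_mul]



lemma XfrakX_pow (r N : ℕ) (hr : 0 < r) (x : ℝ) (n : ℕ) (i : Fin N) (a : Fin r) :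
    (Xmat r N x * frakX r 1 x ^ n) i a
      = if ((i:ℕ)+n) % r = (a:ℕ) then x ^ (((i:ℕ)+n)/r) else 0 := by
  induction n generalizing a with
  | zero => simp [Xmat]
  | succ n ih =>
    have hc : ((i:ℕ)+n) % r < r := Nat.mod_lt _ hr
    rw [pow_succ, ← Matrix.mul_assoc, Matrix.mul_apply]
    have hterm : ∀ c : Fin r, (Xmat r N x * frakX r 1 x ^ n) i c * frakX r 1 x c a
        = if c = (⟨((i:ℕ)+n) % r, hc⟩ : Fin r) then
            x ^ (((i:ℕ)+n)/r) * frakX r 1 x c a else 0 := by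
      intro c; rw [ih]
      by_cases h : ((i:ℕ)+n) % r = (c:ℕ)
      · rw [if_pos h, if_pos (Fin.ext h.symm)]
      · rw [if_neg h, zero_mul, if_neg (fun hcc => h (congrArg Fin.val hcc).symm)]
    rw [Finset.sum_congr rfl fun c _ => hterm c,
      Finset.sum_ite_eq' Finset.univ _ (fun c => x ^ (((i:ℕ)+n)/r) * frakX r 1 x c a),
      if_pos (Finset.mem_univ _)]
    have hin : (i:ℕ) + (n+1) = ((i:ℕ)+n) + 1 := by omega
    rw [hin]
    have hdm := Nat.div_add_mod ((i:ℕ)+n) r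
    have hmc : r * (((i:ℕ)+n)/r) = (((i:ℕ)+n)/r) * r := Nat.mul_comm _ _
    by_cases hlt : ((i:ℕ)+n) % r + 1 < r
    · have h2 : (i:ℕ)+n+1 = (((i:ℕ)+n) % r + 1) + (((i:ℕ)+n)/r) * r := by omega
      have hmod : (((i:ℕ)+n)+1) % r = ((i:ℕ)+n) % r + 1 := by
        rw [h2, Nat.add_mul_mod_self_right, Nat.mod_eq_of_lt hlt]
      have hdiv : (((i:ℕ)+n)+1) / r = ((i:ℕ)+n) / r := by
        rw [h2, Nat.add_mul_div_right _ _ hr, Nat.div_eq_of_lt hlt, zero_add]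
      rw [hmod, hdiv]
      simp only [frakX, Matrix.of_apply]
      by_cases ha : (a:ℕ) = ((i:ℕ)+n) % r + 1
      · rw [if_pos ⟨by omega, ha⟩, mul_one, if_pos ha.symm]
      · rw [if_neg (by omega), if_neg (by omega), mul_zero, if_neg (by omega)]
    · have hceq : ((i:ℕ)+n) % r = r - 1 := by omega
      have hmc2 : (((i:ℕ)+n)/r + 1) * r = (((i:ℕ)+n)/r) * r + r := Nat.succ_mul _ _
      have h2 : (i:ℕ)+n+1 = 0 + (((i:ℕ)+n)/r + 1) * r := by omega
      have hmod : (((i:ℕ)+n)+1) % r = 0 := by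
        rw [h2, Nat.add_mul_mod_self_right, Nat.zero_mod]
      have hdiv : (((i:ℕ)+n)+1) / r = ((i:ℕ)+n) / r + 1 := by
        rw [h2, Nat.add_mul_div_right _ _ hr, Nat.zero_div, zero_add]
      rw [hmod, hdiv]
      simp only [frakX, Matrix.of_apply]
      by_cases ha : (a:ℕ) = 0
      · rw [if_neg (by omega), if_pos ⟨by omega, by omega⟩, if_pos ha.symm, ← pow_succ]
      · rw [if_neg (by omega), if_neg (by omega), mul_zero, if_neg (fun hh => ha hh.symm)]

lemma momC_apply (q p : ℕ) (hq : 0 < q) (hp : 0 < p) (μ : Fin q → Fin p → Measure ℝ)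
    (N n m : ℕ) (i j : Fin N) :
    MomC q p hq hp μ N n m i j =
      ∫ x : ℝ, x ^ (((i:ℕ)+n) / q + ((j:ℕ)+m) / p)
        ∂ μ ⟨((i:ℕ)+n) % q, Nat.mod_lt _ hq⟩ ⟨((j:ℕ)+m) % p, Nat.mod_lt _ hp⟩ := by
  simp only [MomC, Matrix.of_apply]
  have hterm : ∀ (a : Fin q) (b : Fin p),
      (∫ x : ℝ, (Xmat q N x * frakX q 1 x ^ n) i a *
          (Xmat p N x * frakX p 1 x ^ m) j b ∂ μ a b)
        = if a = (⟨((i:ℕ)+n) % q, Nat.mod_lt _ hq⟩ : Fin q) ∧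
             b = (⟨((j:ℕ)+m) % p, Nat.mod_lt _ hp⟩ : Fin p) then
            ∫ x : ℝ, x ^ (((i:ℕ)+n) / q + ((j:ℕ)+m) / p) ∂ μ a b else 0 := by
    intro a b
    by_cases h1 : ((i:ℕ)+n) % q = (a:ℕ)
    · by_cases h2 : ((j:ℕ)+m) % p = (b:ℕ)
      · rw [if_pos ⟨Fin.ext h1.symm, Fin.ext h2.symm⟩]
        have hfun : (fun x : ℝ => (Xmat q N x * frakX q 1 x ^ n) i a *
            (Xmat p N x * frakX p 1 x ^ m) j b)
            = fun x : ℝ => x ^ (((i:ℕ)+n) / q + ((j:ℕ)+m) / p) := by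
          funext x
          rw [XfrakX_pow q N hq, XfrakX_pow p N hp, if_pos h1, if_pos h2, ← pow_add]
        rw [hfun]
      · rw [if_neg (fun hh => h2 (congrArg Fin.val hh.2).symm)]
        have : ∀ x : ℝ, (Xmat q N x * frakX q 1 x ^ n) i a *
            (Xmat p N x * frakX p 1 x ^ m) j b = 0 := fun x => by
          rw [XfrakX_pow p N hp, if_neg h2, mul_zero]
        simp only [this, integral_zero]
    · rw [if_neg (fun hh => h1 (congrArg Fin.val hh.1).symm)]
      have : ∀ x : ℝ, (Xmat q N x * frakX q 1 x ^ n) i a *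
          (Xmat p N x * frakX p 1 x ^ m) j b = 0 := fun x => by
        rw [XfrakX_pow q N hq, if_neg h1, zero_mul]
      simp only [this, integral_zero]
  rw [Finset.sum_congr rfl fun a _ => Finset.sum_congr rfl fun b _ => hterm a b,
    Finset.sum_eq_single (⟨((i:ℕ)+n) % q, Nat.mod_lt _ hq⟩ : Fin q)
      (fun aa _ haa => Finset.sum_eq_zero fun bb _ => if_neg (fun hh => haa hh.1))
      (fun h => absurd (Finset.mem_univ _) h),
    Finset.sum_eq_single (⟨((j:ℕ)+m) % p, Nat.mod_lt _ hp⟩ : Fin p)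
      (fun bb _ hbb => if_neg (fun hh => hbb hh.2))
      (fun h => absurd (Finset.mem_univ _) h),
    if_pos ⟨rfl, rfl⟩]

lemma momC_apply' (q p : ℕ) (hq : 0 < q) (hp : 0 < p) (μ : Fin q → Fin p → Measure ℝ)
    (N n m : ℕ) (i j : Fin N) (a : Fin q) (b : Fin p) (e : ℕ)
    (ha : ((i:ℕ)+n) % q = (a:ℕ)) (hb : ((j:ℕ)+m) % p = (b:ℕ))
    (he : ((i:ℕ)+n) / q + ((j:ℕ)+m) / p = e) :
    MomC q p hq hp μ N n m i j = ∫ x : ℝ, x ^ e ∂ μ a b := by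
  rw [momC_apply]
  have h1 : (⟨((i:ℕ)+n) % q, Nat.mod_lt _ hq⟩ : Fin q) = a := Fin.ext ha
  have h2 : (⟨((j:ℕ)+m) % p, Nat.mod_lt _ hp⟩ : Fin p) = b := Fin.ext hb
  rw [h1, h2, he]


end BidiagAux

/-- Bidiagonal factorization `𝓣_N = L_1 ⋯ L_p U_q ⋯ U_1` of the recursion matrix, where
`U_b = 𝓤_{N,(b,0)}⁻¹ 𝓤_{N,(b−1,0)}` and `L_a = 𝓛_{N,(0,a−1)} 𝓛_{N,(0,a)}⁻¹` come from the
Gauss–Borel factorizations of the Christoffel-perturbed moment matrices. -/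
theorem bidiagonal_factorization (p q N : ℕ) (hp : 0 < p) (hq : 0 < q)
    (μ : Fin q → Fin p → Measure ℝ)
    (hμ : ∀ (a : Fin q) (b : Fin p) (k : ℕ),
      Integrable (fun x : ℝ => |x| ^ k) (μ a b))
    (L U : ℕ → ℕ → Matrix (Fin N) (Fin N) ℝ)
    (hfact : ∀ n m : ℕ, (n ≤ q ∧ m = 0) ∨ (n = 0 ∧ m ≤ p) →
      (∀ i j : Fin N, i < j → L n m i j = 0) ∧
      (∀ i : Fin N, L n m i i = 1) ∧
      (∀ i j : Fin N, j < i → U n m i j = 0) ∧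
      IsUnit (U n m).det ∧
      MomC q p hq hp μ N n m = (L n m)⁻¹ * (U n m)⁻¹) :
    (∀ b : ℕ, 1 ≤ b → b ≤ q →
      (∀ i j : Fin N, (j : ℕ) ≠ (i : ℕ) → (j : ℕ) ≠ (i : ℕ) + 1 →
        ((U b 0)⁻¹ * U (b - 1) 0) i j = 0) ∧
      (∀ i j : Fin N, (j : ℕ) = (i : ℕ) + 1 →
        ((U b 0)⁻¹ * U (b - 1) 0) i j = 1)) ∧
    (∀ a : ℕ, 1 ≤ a → a ≤ p →
      (∀ i : Fin N, (L 0 (a - 1) * (L 0 a)⁻¹) i i = 1) ∧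
      (∀ i j : Fin N, (j : ℕ) ≠ (i : ℕ) → (j : ℕ) + 1 ≠ (i : ℕ) →
        (L 0 (a - 1) * (L 0 a)⁻¹) i j = 0)) ∧
    (L 0 0 * Lam q N (N + q) * Mom q p hq hp μ (N + q) N * U 0 0 =
      ((List.range p).map (fun a => L 0 a * (L 0 (a + 1))⁻¹)).prod *
        ((List.range q).map (fun b => (U (q - b) 0)⁻¹ * U (q - b - 1) 0)).prod) := by
  classical
  refine ⟨?_, ?_, ?_⟩
  · -- U side
    intro b hb1 hbq
    obtain ⟨hL₁lo, hL₁d, hU₁up, hU₁det, hG₁⟩ := hfact b 0 (Or.inl ⟨hbq, rfl⟩)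
    obtain ⟨hL₀lo, hL₀d, hU₀up, hU₀det, hG₀⟩ := hfact (b-1) 0 (Or.inl ⟨by omega, rfl⟩)
    have hshift : ∀ (k : Fin N) (h : (k:ℕ)+1 < N) (l : Fin N),
        MomC q p hq hp μ N b 0 k l = MomC q p hq hp μ N (b-1) 0 ⟨(k:ℕ)+1, h⟩ l := by
      intro k h l
      rw [BidiagAux.momC_apply' q p hq hp μ N b 0 k l
          ⟨((k:ℕ)+b) % q, Nat.mod_lt _ hq⟩ ⟨((l:ℕ)+0) % p, Nat.mod_lt _ hp⟩
          (((k:ℕ)+b)/q + ((l:ℕ)+0)/p) rfl rfl rfl,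
        BidiagAux.momC_apply' q p hq hp μ N (b-1) 0 ⟨(k:ℕ)+1, h⟩ l
          ⟨((k:ℕ)+b) % q, Nat.mod_lt _ hq⟩ ⟨((l:ℕ)+0) % p, Nat.mod_lt _ hp⟩
          (((k:ℕ)+b)/q + ((l:ℕ)+0)/p)
          (by rw [show ((⟨(k:ℕ)+1, h⟩ : Fin N):ℕ) + (b-1) = (k:ℕ)+b from by
            simp only [Fin.val_mk]; omega])
          rfl
          (by rw [show ((⟨(k:ℕ)+1, h⟩ : Fin N):ℕ) + (b-1) = (k:ℕ)+b from by
            simp only [Fin.val_mk]; omega])]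
    constructor
    · intro i j hji hji1
      exact BidiagAux.band_zero _ _ _ _ _ _ hL₀lo (BidiagAux.lo_det_one _ hL₀lo hL₀d)
        hL₁lo (BidiagAux.lo_det_one _ hL₁lo hL₁d) hU₀up hU₀det hU₁up hU₁det
        hG₀ hG₁ hshift i j (by omega)
    · intro i j hij
      exact BidiagAux.band_one _ _ _ _ _ _ hL₀lo hL₀d hL₁lo hL₁d hU₀det
        hG₀ hG₁ hshift i j hij
  · -- L side
    intro a ha1 hap
    obtain ⟨hL₁lo, hL₁d, hU₁up, hU₁det, hG₁⟩ := hfact 0 a (Or.inr ⟨rfl, hap⟩)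
    obtain ⟨hL₀lo, hL₀d, hU₀up, hU₀det, hG₀⟩ := hfact 0 (a-1) (Or.inr ⟨rfl, by omega⟩)
    have hInv := BidiagAux.inv_lo (L 0 a) hL₁lo hL₁d
    constructor
    · intro i
      rw [BidiagAux.lo_diag_mul _ _ hL₀lo hInv.1 i, hL₀d, hInv.2, one_mul]
    · intro i j hji hj1i
      have hG₁t : (MomC q p hq hp μ N 0 a)ᵀ = ((U 0 a)ᵀ)⁻¹ * ((L 0 a)ᵀ)⁻¹ := by
        rw [hG₁, Matrix.transpose_mul, Matrix.transpose_nonsing_inv,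
          Matrix.transpose_nonsing_inv]
      have hG₀t : (MomC q p hq hp μ N 0 (a-1))ᵀ = ((U 0 (a-1))ᵀ)⁻¹ * ((L 0 (a-1))ᵀ)⁻¹ := by
        rw [hG₀, Matrix.transpose_mul, Matrix.transpose_nonsing_inv,
          Matrix.transpose_nonsing_inv]
      have hshift : ∀ (k : Fin N) (h : (k:ℕ)+1 < N) (l : Fin N),
          (MomC q p hq hp μ N 0 a)ᵀ k l = (MomC q p hq hp μ N 0 (a-1))ᵀ ⟨(k:ℕ)+1, h⟩ l := by
        intro k h l
        simp only [Matrix.transpose_apply]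
        rw [BidiagAux.momC_apply' q p hq hp μ N 0 a l k
            ⟨((l:ℕ)+0) % q, Nat.mod_lt _ hq⟩ ⟨((k:ℕ)+a) % p, Nat.mod_lt _ hp⟩
            (((l:ℕ)+0)/q + ((k:ℕ)+a)/p) rfl rfl rfl,
          BidiagAux.momC_apply' q p hq hp μ N 0 (a-1) l ⟨(k:ℕ)+1, h⟩
            ⟨((l:ℕ)+0) % q, Nat.mod_lt _ hq⟩ ⟨((k:ℕ)+a) % p, Nat.mod_lt _ hp⟩
            (((l:ℕ)+0)/q + ((k:ℕ)+a)/p)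
            rfl
            (by rw [show ((⟨(k:ℕ)+1, h⟩ : Fin N):ℕ) + (a-1) = (k:ℕ)+a from by
              simp only [Fin.val_mk]; omega])
            (by rw [show ((⟨(k:ℕ)+1, h⟩ : Fin N):ℕ) + (a-1) = (k:ℕ)+a from by
              simp only [Fin.val_mk]; omega])]
      have key := BidiagAux.band_zero
        ((MomC q p hq hp μ N 0 (a-1))ᵀ) ((MomC q p hq hp μ N 0 a)ᵀ)
        ((U 0 (a-1))ᵀ) ((U 0 a)ᵀ) ((L 0 (a-1))ᵀ) ((L 0 a)ᵀ)
        (fun i j hij => hU₀up j i hij)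
        (by rw [Matrix.det_transpose]; exact hU₀det)
        (fun i j hij => hU₁up j i hij)
        (by rw [Matrix.det_transpose]; exact hU₁det)
        (fun i j hij => hL₀lo j i hij)
        (by rw [Matrix.det_transpose]; exact BidiagAux.lo_det_one _ hL₀lo hL₀d)
        (fun i j hij => hL₁lo j i hij)
        (by rw [Matrix.det_transpose]; exact BidiagAux.lo_det_one _ hL₁lo hL₁d)
        hG₀t hG₁t hshift j i (by omega)
      rw [← Matrix.transpose_nonsing_inv, ← Matrix.transpose_mul,
        Matrix.transpose_apply] at key
      exact key
  · -- product formula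
    obtain ⟨hLq0lo, hLq0d, hUq0up, hUq0det, hGq0⟩ := hfact q 0 (Or.inl ⟨le_rfl, rfl⟩)
    obtain ⟨hL0plo, hL0pd, hU0pup, hU0pdet, hG0p⟩ := hfact 0 p (Or.inr ⟨rfl, le_rfl⟩)
    have hGqp : MomC q p hq hp μ N q 0 = MomC q p hq hp μ N 0 p := by
      ext i j
      rw [BidiagAux.momC_apply' q p hq hp μ N q 0 i j
          ⟨(i:ℕ)%q, Nat.mod_lt _ hq⟩ ⟨(j:ℕ)%p, Nat.mod_lt _ hp⟩
          ((i:ℕ)/q + (j:ℕ)/p + 1) (Nat.add_mod_right _ _) (by rw [Nat.add_zero])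
          (by simp only [Nat.add_zero]; rw [Nat.add_div_right _ hq]; omega),
        BidiagAux.momC_apply' q p hq hp μ N 0 p i j
          ⟨(i:ℕ)%q, Nat.mod_lt _ hq⟩ ⟨(j:ℕ)%p, Nat.mod_lt _ hp⟩
          ((i:ℕ)/q + (j:ℕ)/p + 1) (by rw [Nat.add_zero]) (Nat.add_mod_right _ _)
          (by simp only [Nat.add_zero]; rw [Nat.add_div_right _ hp]; omega)]
    have hΛM : Lam q N (N+q) * Mom q p hq hp μ (N+q) N = MomC q p hq hp μ N q 0 := by
      ext i j
      rw [Matrix.mul_apply,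
        Finset.sum_eq_single (⟨(i:ℕ)+q, by omega⟩ : Fin (N+q))
          (fun k _ hk => by
            simp only [Lam, Matrix.of_apply]
            rw [if_neg (fun hh => hk (Fin.ext hh)), zero_mul])
          (fun h => absurd (Finset.mem_univ _) h)]
      simp only [Lam, Matrix.of_apply, Fin.val_mk, eq_self_iff_true, if_true, one_mul, Mom]
      rw [BidiagAux.momC_apply' q p hq hp μ N q 0 i j
          ⟨((i:ℕ)+q)%q, Nat.mod_lt _ hq⟩ ⟨(j:ℕ)%p, Nat.mod_lt _ hp⟩
          (((i:ℕ)+q)/q + (j:ℕ)/p) rfl (by rw [Nat.add_zero]) (by rw [Nat.add_zero])]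
    have hLL : L q 0 = L 0 p :=
      BidiagAux.lu_unique _ _ _ _ hLq0lo hLq0d hUq0up hUq0det
        hL0plo hL0pd hU0pup hU0pdet (by rw [← hGq0, ← hG0p, hGqp])
    have hLdet : ∀ k, k ≤ p → IsUnit (L 0 k).det := fun k hk =>
      BidiagAux.lo_det_one _ (hfact 0 k (Or.inr ⟨rfl, hk⟩)).1
        (hfact 0 k (Or.inr ⟨rfl, hk⟩)).2.1
    have hUdet : ∀ k, k ≤ q → IsUnit (U k 0).det := fun k hk =>
      (hfact k 0 (Or.inl ⟨hk, rfl⟩)).2.2.2.1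
    have hLprod : ∀ k, k ≤ p →
        ((List.range k).map (fun a => L 0 a * (L 0 (a + 1))⁻¹)).prod
          = L 0 0 * (L 0 k)⁻¹ := by
      intro k
      induction k with
      | zero =>
        intro _
        simp only [List.range_zero, List.map_nil, List.prod_nil]
        exact (Matrix.mul_nonsing_inv _ (hLdet 0 (Nat.zero_le _))).symm
      | succ k ih =>
        intro hk
        rw [List.range_succ, List.map_append, List.prod_append, ih (by omega)]
        simp only [List.map_cons, List.map_nil, List.prod_cons, List.prod_nil,
          Matrix.mul_one]
        rw [Matrix.mul_assoc, ← Matrix.mul_assoc ((L 0 k)⁻¹),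
          Matrix.nonsing_inv_mul _ (hLdet k (by omega)), Matrix.one_mul]
    have hUprod : ∀ k, k ≤ q →
        ((List.range k).map (fun b => (U (q - b) 0)⁻¹ * U (q - b - 1) 0)).prod
          = (U q 0)⁻¹ * U (q - k) 0 := by
      intro k
      induction k with
      | zero =>
        intro _
        simp only [List.range_zero, List.map_nil, List.prod_nil, Nat.sub_zero]
        exact (Matrix.nonsing_inv_mul _ (hUdet q le_rfl)).symm
      | succ k ih =>
        intro hk
        rw [List.range_succ, List.map_append, List.prod_append, ih (by omega)]
        simp only [List.map_cons, List.map_nil, List.prod_cons, List.prod_nil,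
          Matrix.mul_one]
        rw [Matrix.mul_assoc, ← Matrix.mul_assoc (U (q - k) 0),
          Matrix.mul_nonsing_inv _ (hUdet (q - k) (by omega)), Matrix.one_mul,
          show q - k - 1 = q - (k + 1) from rfl]
    rw [Matrix.mul_assoc (L 0 0) (Lam q N (N+q)) (Mom q p hq hp μ (N+q) N), hΛM,
      hGq0, hLL, hLprod p le_rfl, hUprod q le_rfl, Nat.sub_self]
    simp only [Matrix.mul_assoc]
end
end
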